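/- arXiv:2207.08720 — 4 statements merged into one kernel-verified Lean document; each statement's English description precedes it below -/
import Mathlib

section
/- Let ℒ be the dcpo ℕ × ℕ × (ℕ ∪ {∞}) with the order described below, and Σℒ its Scott space. Then the irreducible closed subsets of Σℒ are exactly the principal ideals ↓x (x ∈ ℒ) together with ℒ itself; that is, a Scott-closed set A ⊆ ℒ is irreducible if and only if A = ↓x for some x ∈ ℒ or A = ℒ. -/
open Set Topology TopologicalSpace

universe u v

/-- A subset of a topological space is *saturated* if it equals the intersection of the
open sets containing it. -/
def IsSat {X : Type u} [TopologicalSpace X] (A : Set X) : Prop :=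
  A = ⋂₀ {U : Set X | IsOpen U ∧ A ⊆ U}

/-- The saturation `↑a` of a point `a` : the intersection of all open sets containing `a`. -/
def satPt {X : Type u} [TopologicalSpace X] (a : X) : Set X :=
  ⋂₀ {U : Set X | IsOpen U ∧ a ∈ U}

/-- `KS X` is the collection of all nonempty compact saturated subsets of `X`. -/
def KS (X : Type u) [TopologicalSpace X] : Type u :=
  {K : Set X // K.Nonempty ∧ IsCompact K ∧ IsSat K}

/-- The *Smyth order* on `KS X` : `K ≤ L` iff `L ⊆ K` (reverse inclusion). -/
instance KS.instPartialOrder {X : Type u} [TopologicalSpace X] : PartialOrder (KS X) where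
  le K L := L.1 ⊆ K.1
  le_refl K := subset_rfl
  le_trans K L M h₁ h₂ := by intro x hx; exact h₁ (h₂ hx)
  le_antisymm K L h₁ h₂ := by exact Subtype.ext (subset_antisymm h₂ h₁)

/-- The *upper Vietoris topology* on `KS X`, generated by the sets `□U = {K | K ⊆ U}`
for `U` open in `X`.  The resulting space is the Smyth power space `P_S(X)`. -/
def upperVietoris (X : Type u) [TopologicalSpace X] : TopologicalSpace (KS X) :=
  TopologicalSpace.generateFrom
    {S : Set (KS X) | ∃ U : Set X, IsOpen U ∧ S = {K : KS X | K.1 ⊆ U}}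

/-- Scott-open subsets of a preorder: upper sets inaccessible by suprema of
(nonempty) directed sets. -/
def ScottOpen {P : Type u} [Preorder P] (U : Set P) : Prop :=
  IsUpperSet U ∧ ∀ d : Set P, d.Nonempty → DirectedOn (· ≤ ·) d →
    ∀ a : P, IsLUB d a → a ∈ U → (d ∩ U).Nonempty

/-- The Scott topology of a preorder. -/
def scottTop (P : Type u) [Preorder P] : TopologicalSpace P where
  IsOpen := ScottOpen
  isOpen_univ := ⟨isUpperSet_univ, fun d hd _ _ _ _ => by simpa using hd⟩
  isOpen_inter := by
    rintro U V ⟨hUu, hUd⟩ ⟨hVu, hVd⟩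
    refine ⟨hUu.inter hVu, fun d hd hdir a ha haUV => ?_⟩
    obtain ⟨x, hxd, hxU⟩ := hUd d hd hdir a ha haUV.1
    obtain ⟨y, hyd, hyV⟩ := hVd d hd hdir a ha haUV.2
    obtain ⟨z, hzd, hxz, hyz⟩ := hdir x hxd y hyd
    exact ⟨z, hzd, hUu hxz hxU, hVu hyz hyV⟩
  isOpen_sUnion := by
    intro S hS
    refine ⟨isUpperSet_sUnion fun s hs => (hS s hs).1, fun d hd hdir a ha haU => ?_⟩
    obtain ⟨t, htS, hat⟩ := haU
    obtain ⟨x, hxd, hxt⟩ := (hS t htS).2 d hd hdir a ha hat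
    exact ⟨x, hxd, t, htS, hxt⟩

/-- A topological space is *well-filtered* if for every nonempty family of nonempty compact
saturated sets which is filtered under reverse inclusion and every open `U` containing the
intersection of the family, some member of the family is contained in `U`. -/
def WellFiltered (X : Type u) [TopologicalSpace X] : Prop :=
  ∀ 𝒦 : Set (Set X), 𝒦.Nonempty →
    (∀ K ∈ 𝒦, K.Nonempty ∧ IsCompact K ∧ IsSat K) →
    (∀ K₁ ∈ 𝒦, ∀ K₂ ∈ 𝒦, ∃ K₃ ∈ 𝒦, K₃ ⊆ K₁ ∧ K₃ ⊆ K₂) →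
    ∀ U : Set X, IsOpen U → ⋂₀ 𝒦 ⊆ U → ∃ K ∈ 𝒦, K ⊆ U

/-- The specialization order of a topological space: `x ≤ y` iff `x ∈ cl {y}`. -/
def specLE {X : Type u} [TopologicalSpace X] (x y : X) : Prop := x ∈ closure {y}

/-- Least upper bound with respect to an explicit relation. -/
def RelLUB {P : Type u} (r : P → P → Prop) (d : Set P) (a : P) : Prop :=
  (∀ x ∈ d, r x a) ∧ ∀ b : P, (∀ x ∈ d, r x b) → r a b

/-- Scott openness with respect to an explicit relation. -/
def RelScottOpen {P : Type u} (r : P → P → Prop) (U : Set P) : Prop :=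
  (∀ ⦃x y : P⦄, x ∈ U → r x y → y ∈ U) ∧
  ∀ d : Set P, d.Nonempty → DirectedOn r d → ∀ a : P, RelLUB r d a → a ∈ U → (d ∩ U).Nonempty

/-- A `d`-space (monotone convergence space): the specialization order is directed complete
and every open set is Scott open with respect to the specialization order. -/
def DSpace (X : Type u) [TopologicalSpace X] : Prop :=
  (∀ d : Set X, d.Nonempty → DirectedOn specLE d → ∃ a : X, RelLUB specLE d a) ∧
  ∀ U : Set X, IsOpen U → RelScottOpen specLE U

/-- A space is *sober* if every irreducible closed set is the closure of a unique point. -/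
def SoberSp (Z : Type u) [TopologicalSpace Z] : Prop :=
  ∀ A : Set Z, IsClosed A → IsIrreducible A → ∃! z : Z, A = closure {z}

/-- A closed set `A` is a *Rudin set* if there is a (nonempty) family of nonempty compact
saturated sets, filtered under reverse inclusion, such that `A` is a minimal closed set
meeting every member of the family. -/
def RudinSet {X : Type u} [TopologicalSpace X] (A : Set X) : Prop :=
  IsClosed A ∧
  ∃ 𝒦 : Set (Set X), 𝒦.Nonempty ∧
    (∀ K ∈ 𝒦, K.Nonempty ∧ IsCompact K ∧ IsSat K) ∧
    (∀ K₁ ∈ 𝒦, ∀ K₂ ∈ 𝒦, ∃ K₃ ∈ 𝒦, K₃ ⊆ K₁ ∧ K₃ ⊆ K₂) ∧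
    (∀ K ∈ 𝒦, (A ∩ K).Nonempty) ∧
    (∀ B : Set X, IsClosed B → (∀ K ∈ 𝒦, (B ∩ K).Nonempty) → B ⊆ A → B = A)

/-- A *Rudin space*: every irreducible closed subset is a Rudin set. -/
def RudinSpace (X : Type u) [TopologicalSpace X] : Prop :=
  ∀ A : Set X, IsClosed A → IsIrreducible A → RudinSet A

/-- A closed set `A` is *well-filtered determined* (WD) if every continuous map into a
well-filtered T₀ space sends it to a set whose closure is a point closure. -/
def WDSet {X : Type u} [TopologicalSpace X] (A : Set X) : Prop :=
  ∀ (Y : Type v) [TopologicalSpace Y] [T0Space Y], WellFiltered Y →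
    ∀ f : X → Y, Continuous f → ∃ y : Y, closure (f '' A) = closure {y}

/-- A *well-filtered determined (WD) space*: every irreducible closed subset is WD. -/
def WDSpace (X : Type u) [TopologicalSpace X] : Prop :=
  ∀ A : Set X, IsClosed A → IsIrreducible A → WDSet.{u, v} A

/-- Property S: for every irreducible closed set `A`, the family `{↑a : a ∈ A}` is an
irreducible subset of the Scott power space `Σ K(X)`, or
`◇A = {K ∈ K(X) : K ∩ A ≠ ∅}` is an irreducible closed subset of `Σ K(X)`. -/
def PropertyS (X : Type u) [TopologicalSpace X] : Prop :=
  ∀ A : Set X, IsClosed A → IsIrreducible A →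
    @IsIrreducible (KS X) (scottTop (KS X)) {K : KS X | ∃ a ∈ A, K.1 = satPt a} ∨
    (@IsClosed (KS X) (scottTop (KS X)) {K : KS X | (K.1 ∩ A).Nonempty} ∧
      @IsIrreducible (KS X) (scottTop (KS X)) {K : KS X | (K.1 ∩ A).Nonempty})

/-- The order of Jia's dcpo on `ℕ × ℕ × (ℕ ∪ {∞})`:
`(i₁,j₁,k₁) ≤ (i₂,j₂,k₂)` iff (`i₁ = i₂`, `j₁ = j₂` and `k₁ ≤ k₂`) or
(`i₂ = i₁ + 1`, `k₁ ≤ j₂` and `k₂ = ∞`). -/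
def LJiaLE (a b : ℕ × ℕ × WithTop ℕ) : Prop :=
  (a.1 = b.1 ∧ a.2.1 = b.2.1 ∧ a.2.2 ≤ b.2.2) ∨
  (b.1 = a.1 + 1 ∧ a.2.2 ≤ (b.2.1 : WithTop ℕ) ∧ b.2.2 = ⊤)

set_option linter.unusedSectionVars false

section JiaAux

variable {L : Type} [PartialOrder L] (e : L ≃ ℕ × ℕ × WithTop ℕ)

/-- The point of `L` with coordinates `(i, j, k)`. -/
def jpt (i j : ℕ) (k : WithTop ℕ) : L := e.symm (i, j, k)

@[simp] lemma e_jpt (i j : ℕ) (k : WithTop ℕ) : e (jpt e i j k) = (i, j, k) :=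
  e.apply_symm_apply _

lemma eq_jpt (a : L) (i j : ℕ) (k : WithTop ℕ) (h1 : (e a).1 = i)
    (h2 : (e a).2.1 = j) (h3 : (e a).2.2 = k) : a = jpt e i j k := by
  apply e.injective
  rw [e_jpt]
  exact Prod.ext h1 (Prod.ext h2 h3)

variable (horder : ∀ a b : L, a ≤ b ↔ LJiaLE (e a) (e b))

include horder

lemma jle_iff (a b : L) : a ≤ b ↔
    (((e a).1 = (e b).1 ∧ (e a).2.1 = (e b).2.1 ∧ (e a).2.2 ≤ (e b).2.2) ∨
     ((e b).1 = (e a).1 + 1 ∧ (e a).2.2 ≤ ((e b).2.1 : WithTop ℕ) ∧ (e b).2.2 = ⊤)) :=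
  horder a b

lemma jlvl_le {a b : L} (h : a ≤ b) : (e a).1 ≤ (e b).1 := by
  rcases (jle_iff e horder a b).mp h with ⟨h1, _⟩ | ⟨h1, _⟩ <;> omega

lemma jlvl_ge {a b : L} (h : a ≤ b) : (e b).1 ≤ (e a).1 + 1 := by
  rcases (jle_iff e horder a b).mp h with ⟨h1, _⟩ | ⟨h1, _⟩ <;> omega

lemma jpt_le_same {i j : ℕ} {k k' : WithTop ℕ} (h : k ≤ k') :
    jpt e i j k ≤ jpt e i j k' := by
  rw [jle_iff e horder]
  left
  simp [h]

lemma jpt_le_cross {i j J : ℕ} {k : WithTop ℕ} (h : k ≤ (J : WithTop ℕ)) :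
    jpt e i j k ≤ jpt e (i + 1) J ⊤ := by
  rw [jle_iff e horder]
  right
  simp [h]

omit horder in
lemma forall_nat_le_top {K : WithTop ℕ} (h : ∀ n : ℕ, (n : WithTop ℕ) ≤ K) : K = ⊤ := by
  induction K using WithTop.recTopCoe with
  | top => rfl
  | coe m =>
    exfalso
    have h2 : (m + 1 : ℕ) ≤ m := WithTop.coe_le_coe.mp (h (m + 1))
    omega

lemma jchain_directed (i j : ℕ) :
    DirectedOn (· ≤ ·) (Set.range fun n : ℕ => jpt e i j (n : WithTop ℕ)) := by
  rintro _ ⟨n, rfl⟩ _ ⟨m, rfl⟩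
  exact ⟨jpt e i j ((max n m : ℕ) : WithTop ℕ), ⟨max n m, rfl⟩,
    jpt_le_same e horder (by exact_mod_cast le_max_left n m),
    jpt_le_same e horder (by exact_mod_cast le_max_right n m)⟩

lemma jchain_isLUB (i j : ℕ) :
    IsLUB (Set.range fun n : ℕ => jpt e i j (n : WithTop ℕ)) (jpt e i j ⊤) := by
  constructor
  · rintro _ ⟨n, rfl⟩
    exact jpt_le_same e horder le_top
  · intro b hb
    have h0 := hb ⟨0, rfl⟩
    rcases (jle_iff e horder _ _).mp h0 with ⟨h1, h2, _⟩ | ⟨h1, h2, h3⟩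
    · simp only [e_jpt] at h1 h2
      have hK : (e b).2.2 = ⊤ := by
        apply forall_nat_le_top
        intro n
        have hn := hb ⟨n, rfl⟩
        rcases (jle_iff e horder _ _).mp hn with ⟨_, _, h⟩ | ⟨hb1, _, _⟩
        · simpa using h
        · simp only [e_jpt] at hb1; omega
      have : b = jpt e i j ⊤ := eq_jpt e b i j ⊤ h1.symm h2.symm hK
      rw [this]
    · simp only [e_jpt] at h1 h3
      exfalso
      have : ((e b).2.1 : WithTop ℕ) = ⊤ := by
        apply forall_nat_le_top
        intro n
        have hn := hb ⟨n, rfl⟩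
        rcases (jle_iff e horder _ _).mp hn with ⟨hb1, _, _⟩ | ⟨_, h, _⟩
        · simp only [e_jpt] at hb1; omega
        · simpa using h
      simp at this

lemma jclosed_of {A : Set L} (hl : IsLowerSet A)
    (hf : ∀ i j : ℕ, (∀ n : ℕ, jpt e i j (n : WithTop ℕ) ∈ A) → jpt e i j ⊤ ∈ A) :
    @IsClosed L (scottTop L) A := by
  rw [← @isOpen_compl_iff L A (scottTop L)]
  show ScottOpen Aᶜ
  constructor
  · intro a b hab ha hb
    exact ha (hl hab hb)
  · intro d hdne hdir a hlub haC
    by_contra hno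
    have hdA : ∀ y ∈ d, y ∈ A := by
      intro y hy
      by_contra hyA
      exact hno ⟨y, hy, hyA⟩
    have hub : ∀ y ∈ d, y ≤ a := fun y hy => hlub.1 hy
    by_cases had : a ∈ d
    · exact haC (hdA a had)
    by_cases hx : ∃ x ∈ d, (e x).1 = (e a).1 ∧ (e x).2.1 = (e a).2.1
    · obtain ⟨x, hxd, hx1, hx2⟩ := hx
      have cof : ∀ y ∈ d, ∃ n : ℕ, jpt e (e a).1 (e a).2.1 (n : WithTop ℕ) ∈ d ∧
          y ≤ jpt e (e a).1 (e a).2.1 (n : WithTop ℕ) ∧ (n : WithTop ℕ) ≤ (e a).2.2 := by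
        intro y hyd
        obtain ⟨z, hzd, hxz, hyz⟩ := hdir x hxd y hyd
        have hza := hub z hzd
        have hz1 : (e z).1 = (e a).1 :=
          le_antisymm (jlvl_le e horder hza) (hx1 ▸ jlvl_le e horder hxz)
        have hz2 : (e z).2.1 = (e a).2.1 := by
          rcases (jle_iff e horder x z).mp hxz with ⟨_, h2, _⟩ | ⟨h1, _, _⟩
          · rw [← h2, hx2]
          · omega
        have hzk : (e z).2.2 ≤ (e a).2.2 := by
          rcases (jle_iff e horder z a).mp hza with ⟨_, _, h3⟩ | ⟨h1, _, _⟩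
          · exact h3
          · omega
        rcases eq_or_ne (e z).2.2 ⊤ with htz | htz
        · exfalso
          have hka : (e a).2.2 = ⊤ := top_le_iff.mp (htz ▸ hzk)
          have : z = a := by
            apply e.injective
            exact Prod.ext hz1 (Prod.ext hz2 (htz.trans hka.symm))
          exact had (this ▸ hzd)
        · obtain ⟨n, hn0⟩ := WithTop.ne_top_iff_exists.mp htz
          have hn : ((n : ℕ) : WithTop ℕ) = (e z).2.2 := by exact_mod_cast hn0
          have hz : z = jpt e (e a).1 (e a).2.1 (n : WithTop ℕ) :=
            eq_jpt e z _ _ _ hz1 hz2 hn.symm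
          exact ⟨n, hz ▸ hzd, hz ▸ hyz, by rw [hn]; exact hzk⟩
      by_cases hb : BddAbove {n : ℕ | jpt e (e a).1 (e a).2.1 (n : WithTop ℕ) ∈ d}
      · obtain ⟨n₀, hn₀, _, _⟩ := cof x hxd
        have hSne : {n : ℕ | jpt e (e a).1 (e a).2.1 (n : WithTop ℕ) ∈ d}.Nonempty :=
          ⟨n₀, hn₀⟩
        have hmem := Nat.sSup_mem hSne hb
        set m := sSup {n : ℕ | jpt e (e a).1 (e a).2.1 (n : WithTop ℕ) ∈ d} with hm
        have hbub : jpt e (e a).1 (e a).2.1 (m : WithTop ℕ) ∈ upperBounds d := by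
          intro y hy
          obtain ⟨n, hnd, hyn, _⟩ := cof y hy
          exact le_trans hyn (jpt_le_same e horder (by exact_mod_cast le_csSup hb hnd))
        have h1 := hlub.2 hbub
        have h2 := hub _ hmem
        have : a = jpt e (e a).1 (e a).2.1 (m : WithTop ℕ) := le_antisymm h1 h2
        exact had (this ▸ hmem)
      · rw [not_bddAbove_iff] at hb
        have hallA : ∀ n : ℕ, jpt e (e a).1 (e a).2.1 (n : WithTop ℕ) ∈ A := by
          intro n
          obtain ⟨n', hn'S, hlt⟩ := hb n
          exact hl (jpt_le_same e horder (by exact_mod_cast hlt.le)) (hdA _ hn'S)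
        have htopA := hf _ _ hallA
        have hk : (e a).2.2 = ⊤ := by
          apply forall_nat_le_top
          intro n
          obtain ⟨n', hn'S, hlt⟩ := hb n
          have hle := hub _ hn'S
          rcases (jle_iff e horder _ _).mp hle with ⟨_, _, h3⟩ | ⟨h1, _, _⟩
          · simp only [e_jpt] at h3
            exact le_trans (by exact_mod_cast hlt.le) h3
          · simp only [e_jpt] at h1; omega
        have : a = jpt e (e a).1 (e a).2.1 ⊤ := eq_jpt e a _ _ _ rfl rfl hk
        exact haC (this ▸ htopA)
    · push_neg at hx
      obtain ⟨y₀, hy₀⟩ := hdne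
      have hlow : ∀ y ∈ d, (e a).1 = (e y).1 + 1 ∧ (e y).2.2 ≤ ((e a).2.1 : WithTop ℕ) := by
        intro y hy
        rcases (jle_iff e horder y a).mp (hub y hy) with ⟨h1, h2, _⟩ | ⟨h1, h2, _⟩
        · exact absurd h2 (hx y hy h1)
        · exact ⟨h1, h2⟩
      have hcol : ∀ y ∈ d, ∀ y' ∈ d, (e y).2.1 = (e y').2.1 := by
        intro y hy y' hy'
        obtain ⟨z, hzd, hyz, hy'z⟩ := hdir y hy y' hy'
        have hz := hlow z hzd
        have hyl := hlow y hy
        have hy'l := hlow y' hy'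
        have c1 : (e y).2.1 = (e z).2.1 := by
          rcases (jle_iff e horder y z).mp hyz with ⟨_, h2, _⟩ | ⟨h1, _, _⟩
          · exact h2
          · omega
        have c2 : (e y').2.1 = (e z).2.1 := by
          rcases (jle_iff e horder y' z).mp hy'z with ⟨_, h2, _⟩ | ⟨h1, _, _⟩
          · exact h2
          · omega
        rw [c1, c2]
      have hbub : jpt e (e y₀).1 (e y₀).2.1 ⊤ ∈ upperBounds d := by
        intro y hy
        rw [jle_iff e horder]
        left
        refine ⟨?_, ?_, ?_⟩
        · simp only [e_jpt]
          have h1 := (hlow y hy).1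
          have h2 := (hlow y₀ hy₀).1
          omega
        · simp only [e_jpt]
          exact hcol _ hy _ hy₀
        · simp only [e_jpt]
          exact le_top
      have hab := hlub.2 hbub
      rcases (jle_iff e horder _ _).mp hab with ⟨h1, _, _⟩ | ⟨h1, _, _⟩ <;>
        · simp only [e_jpt] at h1
          have := (hlow y₀ hy₀).1
          omega

lemma jlower_of_closed {A : Set L} (h : @IsClosed L (scottTop L) A) : IsLowerSet A := by
  intro a b hba ha
  by_contra hb
  have hupper : ScottOpen Aᶜ := h.isOpen_compl
  exact (hupper.1 hba hb) ha

lemma jfiber_of_closed {A : Set L} (h : @IsClosed L (scottTop L) A) {i j : ℕ}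
    (hall : ∀ n : ℕ, jpt e i j (n : WithTop ℕ) ∈ A) : jpt e i j ⊤ ∈ A := by
  by_contra htop
  have hopen : ScottOpen Aᶜ := h.isOpen_compl
  obtain ⟨z, ⟨n, rfl⟩, hz⟩ := hopen.2 (Set.range fun n : ℕ => jpt e i j (n : WithTop ℕ))
    ⟨jpt e i j ((0 : ℕ) : WithTop ℕ), 0, rfl⟩
    (jchain_directed e horder i j) _ (jchain_isLUB e horder i j) htop
  exact hz (hall n)

lemma jmate {U : Set L} (h : @IsOpen L (scottTop L) U) {i j : ℕ}
    (ht : jpt e i j ⊤ ∈ U) : ∃ n : ℕ, jpt e i j (n : WithTop ℕ) ∈ U := by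
  obtain ⟨z, ⟨n, rfl⟩, hz⟩ := (show ScottOpen U from h).2
    (Set.range fun n : ℕ => jpt e i j (n : WithTop ℕ))
    ⟨jpt e i j ((0 : ℕ) : WithTop ℕ), 0, rfl⟩
    (jchain_directed e horder i j) _ (jchain_isLUB e horder i j) ht
  exact ⟨n, hz⟩

lemma closed_lvl_lt (m : ℕ) : @IsClosed L (scottTop L) {c : L | (e c).1 < m} := by
  apply jclosed_of e horder
  · intro a b hba ha
    exact lt_of_le_of_lt (jlvl_le e horder hba) ha
  · intro i j hall
    have := hall 0
    simp only [Set.mem_setOf_eq, e_jpt] at this ⊢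
    exact this

lemma closed_ideal (x : L) : @IsClosed L (scottTop L) {y : L | y ≤ x} := by
  apply jclosed_of e horder
  · intro a b hba ha
    exact hba.trans ha
  · intro i j hall
    rcases (jle_iff e horder _ x).mp (hall 0) with ⟨h1, h2, _⟩ | ⟨h1, h2, h3⟩
    · simp only [e_jpt] at h1 h2
      have hk : (e x).2.2 = ⊤ := by
        apply forall_nat_le_top
        intro n
        rcases (jle_iff e horder _ x).mp (hall n) with ⟨_, _, h⟩ | ⟨hb1, _, _⟩
        · simpa using h
        · simp only [e_jpt] at hb1; omega
      have : x = jpt e i j ⊤ := eq_jpt e x i j ⊤ h1.symm h2.symm hk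
      show jpt e i j ⊤ ≤ x
      rw [this]
    · simp only [e_jpt] at h1 h2 h3
      exfalso
      have : ((e x).2.1 : WithTop ℕ) = ⊤ := by
        apply forall_nat_le_top
        intro n
        rcases (jle_iff e horder _ x).mp (hall n) with ⟨hb1, _, _⟩ | ⟨_, h, _⟩
        · simp only [e_jpt] at hb1; omega
        · simpa using h
      simp at this

lemma closed_band (l j₀ : ℕ) :
    @IsClosed L (scottTop L) {c : L | (e c).1 < l ∨ ((e c).1 = l ∧ (e c).2.1 ≠ j₀)} := by
  apply jclosed_of e horder
  · intro a b hba ha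
    rcases ha with h | ⟨h1, h2⟩
    · exact Or.inl (lt_of_le_of_lt (jlvl_le e horder hba) h)
    · rcases Nat.lt_or_ge (e b).1 l with hlt | hge
      · exact Or.inl hlt
      · have hbl : (e b).1 = l := le_antisymm (h1 ▸ jlvl_le e horder hba) hge
        refine Or.inr ⟨hbl, ?_⟩
        rcases (jle_iff e horder b a).mp hba with ⟨_, h2', _⟩ | ⟨hc, _, _⟩
        · rw [h2']; exact h2
        · omega
  · intro i j hall
    have h0 := hall 0
    simp only [Set.mem_setOf_eq, e_jpt] at h0 ⊢
    exact h0

end JiaAux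
section JiaMain

variable {L : Type} [PartialOrder L] (e : L ≃ ℕ × ℕ × WithTop ℕ)
variable (horder : ∀ a b : L, a ≤ b ↔ LJiaLE (e a) (e b))

include horder

lemma junbounded (A : Set L) (hcl : @IsClosed L (scottTop L) A) (hne : A.Nonempty)
    (hpre : ∀ Z₁ Z₂ : Set L, @IsClosed L (scottTop L) Z₁ → @IsClosed L (scottTop L) Z₂ →
      A ⊆ Z₁ ∪ Z₂ → A ⊆ Z₁ ∨ A ⊆ Z₂)
    (hnomax : ∀ x ∈ A, ∃ b ∈ A, ¬ b ≤ x) :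
    ∀ m : ℕ, ∃ c ∈ A, m ≤ (e c).1 := by
  by_contra hcon
  push_neg at hcon
  obtain ⟨m, hm⟩ := hcon
  obtain ⟨c', hc'⟩ := hne
  have hLvne : {i : ℕ | ∃ c ∈ A, (e c).1 = i}.Nonempty := ⟨(e c').1, c', hc', rfl⟩
  have hLvbdd : BddAbove {i : ℕ | ∃ c ∈ A, (e c).1 = i} := by
    refine ⟨m, ?_⟩
    rintro i ⟨c, hc, rfl⟩
    exact (hm c hc).le
  set l := sSup {i : ℕ | ∃ c ∈ A, (e c).1 = i} with hldef
  obtain ⟨c₀, hc₀A, hc₀⟩ := Nat.sSup_mem hLvne hLvbdd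
  have hmax : ∀ c ∈ A, (e c).1 ≤ l := fun c hc => le_csSup hLvbdd ⟨c, hc, rfl⟩
  by_cases htwo : ∃ c₁ ∈ A, (e c₁).1 = l ∧ (e c₁).2.1 ≠ (e c₀).2.1
  · obtain ⟨c₁, hc₁A, hc₁l, hc₁j⟩ := htwo
    have hcover : A ⊆ {c : L | (e c).1 < l ∨ ((e c).1 = l ∧ (e c).2.1 ≠ (e c₀).2.1)} ∪
        {c : L | (e c).1 < l ∨ ((e c).1 = l ∧ (e c).2.1 ≠ (e c₁).2.1)} := by
      intro c hc
      by_cases hcl' : (e c).1 < l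
      · exact Or.inl (Or.inl hcl')
      · have hceq : (e c).1 = l := le_antisymm (hmax c hc) (not_lt.mp hcl')
        by_cases hcj : (e c).2.1 = (e c₀).2.1
        · exact Or.inr (Or.inr ⟨hceq, fun heq => hc₁j (heq ▸ hcj)⟩)
        · exact Or.inl (Or.inr ⟨hceq, hcj⟩)
    rcases hpre _ _ (closed_band e horder l (e c₀).2.1) (closed_band e horder l (e c₁).2.1)
      hcover with hsub | hsub
    · rcases hsub hc₀A with h | ⟨_, h⟩
      · omega
      · exact h rfl
    · rcases hsub hc₁A with h | ⟨_, h⟩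
      · omega
      · exact h rfl
  · push_neg at htwo
    have hxex : ∃ x ∈ A, (e x).1 = l ∧ (e x).2.1 = (e c₀).2.1 ∧
        ∀ c ∈ A, (e c).1 = l → c ≤ x := by
      by_cases htp : jpt e l (e c₀).2.1 ⊤ ∈ A
      · refine ⟨_, htp, by simp, by simp, ?_⟩
        intro c hc hcl'
        rw [jle_iff e horder]
        left
        refine ⟨by simp [hcl'], by simp [htwo c hc hcl'], by simp⟩
      · have hNSb : BddAbove {n : ℕ | jpt e l (e c₀).2.1 (n : WithTop ℕ) ∈ A} := by
          by_contra hnb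
          rw [not_bddAbove_iff] at hnb
          refine htp (jfiber_of_closed e horder hcl (fun n => ?_))
          obtain ⟨n', hn', hlt⟩ := hnb n
          exact jlower_of_closed e horder hcl
            (jpt_le_same e horder (by exact_mod_cast hlt.le)) hn'
        have hNSne : {n : ℕ | jpt e l (e c₀).2.1 (n : WithTop ℕ) ∈ A}.Nonempty := by
          rcases eq_or_ne (e c₀).2.2 ⊤ with hc₀t | hc₀t
          · exact absurd ((eq_jpt e c₀ l _ _ hc₀ rfl hc₀t) ▸ hc₀A) htp
          · obtain ⟨n, hn0⟩ := WithTop.ne_top_iff_exists.mp hc₀t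
            have hn : ((n : ℕ) : WithTop ℕ) = (e c₀).2.2 := by exact_mod_cast hn0
            have hc₀e : c₀ = jpt e l (e c₀).2.1 ((n : ℕ) : WithTop ℕ) :=
              eq_jpt e c₀ l _ _ hc₀ rfl hn.symm
            refine ⟨n, ?_⟩
            show jpt e l (e c₀).2.1 ((n : ℕ) : WithTop ℕ) ∈ A
            rw [← hc₀e]
            exact hc₀A
        have hmem : jpt e l (e c₀).2.1
            ((sSup {n : ℕ | jpt e l (e c₀).2.1 (n : WithTop ℕ) ∈ A} : ℕ) : WithTop ℕ) ∈ A :=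
          Nat.sSup_mem hNSne hNSb
        refine ⟨_, hmem, by simp, by simp, ?_⟩
        intro c hc hcl'
        have hcj := htwo c hc hcl'
        rcases eq_or_ne (e c).2.2 ⊤ with hct | hct
        · exact absurd ((eq_jpt e c l _ _ hcl' hcj hct) ▸ hc) htp
        · obtain ⟨n, hn0⟩ := WithTop.ne_top_iff_exists.mp hct
          have hn : ((n : ℕ) : WithTop ℕ) = (e c).2.2 := by exact_mod_cast hn0
          have hnNS : n ∈ {n : ℕ | jpt e l (e c₀).2.1 (n : WithTop ℕ) ∈ A} := by
            rw [Set.mem_setOf_eq, ← eq_jpt e c l _ _ hcl' hcj hn.symm]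
            exact hc
          have hns := le_csSup hNSb hnNS
          rw [jle_iff e horder]
          left
          refine ⟨by simp [hcl'], by simp [hcj], ?_⟩
          simp only [e_jpt]
          rw [← hn]
          exact_mod_cast hns
    obtain ⟨x, hxA, hxl, hxj, hxtop⟩ := hxex
    obtain ⟨b, hbA, hbx⟩ := hnomax x hxA
    have hcover : A ⊆ {y : L | y ≤ x} ∪
        {c : L | (e c).1 < l ∨ ((e c).1 = l ∧ (e c).2.1 ≠ (e x).2.1)} := by
      intro c hc
      by_cases hcl' : (e c).1 < l
      · exact Or.inr (Or.inl hcl')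
      · have hceq : (e c).1 = l := le_antisymm (hmax c hc) (not_lt.mp hcl')
        exact Or.inl (hxtop c hc hceq)
    rcases hpre _ _ (closed_ideal e horder x) (closed_band e horder l (e x).2.1)
      hcover with hsub | hsub
    · exact hbx (hsub hbA)
    · rcases hsub hxA with h | ⟨_, h⟩
      · omega
      · exact h rfl

lemma jhigh (A : Set L) (hcl : @IsClosed L (scottTop L) A)
    (hpre : ∀ Z₁ Z₂ : Set L, @IsClosed L (scottTop L) Z₁ → @IsClosed L (scottTop L) Z₂ →
      A ⊆ Z₁ ∪ Z₂ → A ⊆ Z₁ ∨ A ⊆ Z₂)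
    (hub : ∀ m : ℕ, ∃ c ∈ A, m ≤ (e c).1) (l : ℕ) :
    A ⊆ @closure L (scottTop L) (A ∩ {c : L | l ≤ (e c).1}) := by
  letI : TopologicalSpace L := scottTop L
  have hcover : A ⊆ {c : L | (e c).1 < l} ∪ closure (A ∩ {c : L | l ≤ (e c).1}) := by
    intro c hc
    by_cases h : (e c).1 < l
    · exact Or.inl h
    · exact Or.inr (subset_closure ⟨hc, not_lt.mp h⟩)
  rcases hpre _ _ (closed_lvl_lt e horder l) isClosed_closure hcover with hsub | hsub
  · obtain ⟨c, hcA, hcl'⟩ := hub l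
    exact absurd (hsub hcA) (not_lt.mpr hcl')
  · exact hsub

lemma jEL (S : Set L) (l h : ℕ) (hS : S ⊆ {c : L | l + 1 ≤ (e c).1}) (a : L)
    (ha : a ∈ @closure L (scottTop L) S) (hal : (e a).1 = l)
    (hah : (h : WithTop ℕ) ≤ (e a).2.2) :
    ∃ J : ℕ, h ≤ J ∧ jpt e (l + 1) J ⊤ ∈ @closure L (scottTop L) S := by
  letI : TopologicalSpace L := scottTop L
  by_contra hno
  push_neg at hno
  have hCScl : IsClosed (closure S) := isClosed_closure
  have hTcl : @IsClosed L (scottTop L) ({c : L | (e c).1 < l} ∪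
      {c : L | (e c).1 = l ∧ ∃ J : ℕ, jpt e (l + 1) J ⊤ ∈ closure S ∧
        (e c).2.2 ≤ (J : WithTop ℕ)} ∪
      (closure S ∩ {c : L | l + 1 ≤ (e c).1})) := by
    apply jclosed_of e horder
    · intro p q hqp hp
      rcases hp with (hp | hp) | hp
      · exact Or.inl (Or.inl (lt_of_le_of_lt (jlvl_le e horder hqp) hp))
      · rcases Nat.lt_or_ge (e q).1 l with hq | hq
        · exact Or.inl (Or.inl hq)
        · have hqeq : (e q).1 = l := le_antisymm (hp.1 ▸ jlvl_le e horder hqp) hq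
          obtain ⟨J, hJ1, hJ2⟩ := hp.2
          have hpl' : (e p).1 = l := hp.1
          rcases (jle_iff e horder q p).mp hqp with ⟨_, _, h3⟩ | ⟨hc, _, _⟩
          · exact Or.inl (Or.inr ⟨hqeq, J, hJ1, le_trans h3 hJ2⟩)
          · exfalso; omega
      · have hqCS : q ∈ closure S := jlower_of_closed e horder hCScl hqp hp.1
        rcases Nat.lt_or_ge (e q).1 (l + 1) with hq | hq
        · rcases Nat.lt_or_ge (e q).1 l with hq' | hq'
          · exact Or.inl (Or.inl hq')
          · have hqeq : (e q).1 = l := by omega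
            have hpl : (e p).1 = l + 1 := by
              have h1 := jlvl_ge e horder hqp
              have h2 : l + 1 ≤ (e p).1 := hp.2
              omega
            rcases (jle_iff e horder q p).mp hqp with ⟨h1, _, _⟩ | ⟨_, h2, h3⟩
            · exfalso; omega
            · have hpeq : p = jpt e (l + 1) (e p).2.1 ⊤ := eq_jpt e p _ _ _ hpl rfl h3
              exact Or.inl (Or.inr ⟨hqeq, (e p).2.1, hpeq ▸ hp.1, h2⟩)
        · exact Or.inr ⟨hqCS, hq⟩
    · intro i j hall
      rcases Nat.lt_or_ge i l with hi | hi
      · exact Or.inl (Or.inl (by simpa using hi))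
      rcases Nat.lt_or_ge i (l + 1) with hi' | hi'
      · exfalso
        rcases hall h with (hh | hh) | hh
        · simp only [Set.mem_setOf_eq, e_jpt] at hh; omega
        · obtain ⟨_, J, hJ1, hJ2⟩ := hh
          simp only [e_jpt] at hJ2
          have hhJ : h ≤ J := by exact_mod_cast hJ2
          exact hno J hhJ hJ1
        · have := hh.2
          simp only [Set.mem_setOf_eq, e_jpt] at this
          omega
      · have hmem : ∀ n : ℕ, jpt e i j (n : WithTop ℕ) ∈ closure S := by
          intro n
          rcases hall n with (hh | hh) | hh
          · simp only [Set.mem_setOf_eq, e_jpt] at hh; omega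
          · have := hh.1
            simp only [e_jpt] at this
            omega
          · exact hh.1
        exact Or.inr ⟨jfiber_of_closed e horder hCScl hmem, by simpa using hi'⟩
  have hST : S ⊆ {c : L | (e c).1 < l} ∪
      {c : L | (e c).1 = l ∧ ∃ J : ℕ, jpt e (l + 1) J ⊤ ∈ closure S ∧
        (e c).2.2 ≤ (J : WithTop ℕ)} ∪
      (closure S ∩ {c : L | l + 1 ≤ (e c).1}) :=
    fun c hc => Or.inr ⟨subset_closure hc, hS hc⟩
  have haT := closure_minimal hST hTcl ha
  rcases haT with (hh | hh) | hh
  · rw [Set.mem_setOf_eq] at hh; omega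
  · obtain ⟨_, J, hJ1, hJ2⟩ := hh
    have hhJ : h ≤ J := by
      have h1 : (h : WithTop ℕ) ≤ (J : WithTop ℕ) := le_trans hah hJ2
      exact_mod_cast h1
    exact hno J hhJ hJ1
  · have := hh.2
    rw [Set.mem_setOf_eq, hal] at this
    omega

lemma jmain (A : Set L) (hcl : @IsClosed L (scottTop L) A) (hne : A.Nonempty)
    (hpre : ∀ Z₁ Z₂ : Set L, @IsClosed L (scottTop L) Z₁ → @IsClosed L (scottTop L) Z₂ →
      A ⊆ Z₁ ∪ Z₂ → A ⊆ Z₁ ∨ A ⊆ Z₂)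
    (hnomax : ∀ x ∈ A, ∃ b ∈ A, ¬ b ≤ x) : A = Set.univ := by
  letI : TopologicalSpace L := scottTop L
  have hub := junbounded e horder A hcl hne hpre hnomax
  have hcls : ∀ l : ℕ, A ⊆ closure (A ∩ {c : L | l ≤ (e c).1}) :=
    jhigh e horder A hcl hpre hub
  have hclsub : ∀ l : ℕ, closure (A ∩ {c : L | l ≤ (e c).1}) ⊆ A :=
    fun l => closure_minimal Set.inter_subset_left hcl
  obtain ⟨a₀, ha₀⟩ := hne
  set μ := (e a₀).1 with hμ
  have step0 : ∃ J : ℕ, jpt e (μ + 1) J ⊤ ∈ A := by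
    obtain ⟨J, _, hJ⟩ := jEL e horder (A ∩ {c : L | μ + 1 ≤ (e c).1}) μ 0
      (fun c hc => hc.2) a₀ (hcls (μ + 1) ha₀) rfl (by simp)
    exact ⟨J, hclsub _ hJ⟩
  have stepS : ∀ l : ℕ, μ + 1 ≤ l → (∃ J : ℕ, jpt e l J ⊤ ∈ A) →
      ∀ h : ℕ, ∃ J : ℕ, h ≤ J ∧ jpt e (l + 1) J ⊤ ∈ A := by
    intro l hl hex h
    obtain ⟨J, hJ⟩ := hex
    obtain ⟨J', hJ'1, hJ'2⟩ := jEL e horder (A ∩ {c : L | l + 1 ≤ (e c).1}) l h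
      (fun c hc => hc.2) (jpt e l J ⊤) (hcls (l + 1) hJ) (by simp) (by simp)
    exact ⟨J', hJ'1, hclsub _ hJ'2⟩
  have hexTop : ∀ l : ℕ, μ + 1 ≤ l → ∃ J : ℕ, jpt e l J ⊤ ∈ A := by
    intro l hl
    induction l, hl using Nat.le_induction with
    | base => exact step0
    | succ l hl ih =>
      obtain ⟨J, _, hJ⟩ := stepS l hl ih 0
      exact ⟨J, hJ⟩
  have htops : ∀ l : ℕ, μ + 1 ≤ l → ∀ h : ℕ, ∃ J : ℕ, h ≤ J ∧ jpt e (l + 1) J ⊤ ∈ A :=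
    fun l hl => stepS l hl (hexTop l hl)
  have full_of_tops : ∀ l : ℕ, (∀ h : ℕ, ∃ J : ℕ, h ≤ J ∧ jpt e (l + 1) J ⊤ ∈ A) →
      ∀ j : ℕ, ∀ k : WithTop ℕ, jpt e l j k ∈ A := by
    intro l htl j k
    have hfin : ∀ n : ℕ, jpt e l j (n : WithTop ℕ) ∈ A := by
      intro n
      obtain ⟨J, hnJ, hJA⟩ := htl n
      exact jlower_of_closed e horder hcl
        (jpt_le_cross e horder (by exact_mod_cast hnJ)) hJA
    induction k using WithTop.recTopCoe with
    | top => exact jfiber_of_closed e horder hcl hfin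
    | coe n => exact hfin n
  have hfull_ge : ∀ l : ℕ, μ + 1 ≤ l → ∀ j : ℕ, ∀ k : WithTop ℕ, jpt e l j k ∈ A :=
    fun l hl => full_of_tops l (htops l hl)
  have hfull_down : ∀ l : ℕ, (∀ j : ℕ, ∀ k : WithTop ℕ, jpt e (l + 1) j k ∈ A) →
      ∀ j : ℕ, ∀ k : WithTop ℕ, jpt e l j k ∈ A := by
    intro l hF
    exact full_of_tops l (fun h => ⟨h, le_refl h, hF h ⊤⟩)
  have hfull : ∀ l j : ℕ, ∀ k : WithTop ℕ, jpt e l j k ∈ A := by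
    have aux : ∀ n : ℕ, ∀ j : ℕ, ∀ k : WithTop ℕ, jpt e (μ + 1 - n) j k ∈ A := by
      intro n
      induction n with
      | zero => exact hfull_ge (μ + 1) (le_refl _)
      | succ n ih =>
        rcases Nat.eq_zero_or_pos (μ + 1 - n) with h0 | hpos
        · have heq : μ + 1 - (n + 1) = μ + 1 - n := by omega
          rw [heq]
          exact ih
        · have heq : μ + 1 - n = (μ + 1 - (n + 1)) + 1 := by omega
          exact hfull_down _ (heq ▸ ih)
    intro l
    rcases Nat.lt_or_ge l (μ + 1) with hl | hl
    · have heq : l = μ + 1 - (μ + 1 - l) := by omega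
      rw [heq]
      exact aux _
    · exact hfull_ge l hl
  ext y
  simp only [Set.mem_univ, iff_true]
  have hy : y = jpt e (e y).1 (e y).2.1 (e y).2.2 := eq_jpt e y _ _ _ rfl rfl rfl
  rw [hy]
  exact hfull _ _ _

lemma jopen_meet (U V : Set L) (hU : @IsOpen L (scottTop L) U)
    (hV : @IsOpen L (scottTop L) V) (hUne : U.Nonempty) (hVne : V.Nonempty) :
    (U ∩ V).Nonempty := by
  have topIn : ∀ W : Set L, @IsOpen L (scottTop L) W → ∀ u ∈ W,
      ∃ i j : ℕ, jpt e i j ⊤ ∈ W := by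
    intro W hW u hu
    rcases eq_or_ne (e u).2.2 ⊤ with ht | ht
    · exact ⟨(e u).1, (e u).2.1, (eq_jpt e u _ _ _ rfl rfl ht) ▸ hu⟩
    · obtain ⟨n, hn0⟩ := WithTop.ne_top_iff_exists.mp ht
      have hn : ((n : ℕ) : WithTop ℕ) = (e u).2.2 := by exact_mod_cast hn0
      refine ⟨(e u).1 + 1, n, ?_⟩
      have hle : u ≤ jpt e ((e u).1 + 1) n ⊤ := by
        rw [jle_iff e horder]
        right
        refine ⟨by simp, ?_, by simp⟩
        simp only [e_jpt]
        exact le_of_eq hn.symm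
      exact (show ScottOpen W from hW).1 hle hu
  have lift1 : ∀ W : Set L, @IsOpen L (scottTop L) W → ∀ i j : ℕ, jpt e i j ⊤ ∈ W →
      ∃ j' : ℕ, jpt e (i + 1) j' ⊤ ∈ W := by
    intro W hW i j hij
    obtain ⟨n, hn⟩ := jmate e horder hW hij
    exact ⟨n, (show ScottOpen W from hW).1 (jpt_le_cross e horder le_rfl) hn⟩
  have liftTo : ∀ W : Set L, @IsOpen L (scottTop L) W → ∀ i j : ℕ, jpt e i j ⊤ ∈ W →
      ∀ m : ℕ, i ≤ m → ∃ j' : ℕ, jpt e m j' ⊤ ∈ W := by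
    intro W hW i j hij m him
    induction m, him using Nat.le_induction with
    | base => exact ⟨j, hij⟩
    | succ m hm ih =>
      obtain ⟨j', hj'⟩ := ih
      exact lift1 W hW m j' hj'
  obtain ⟨u, hu⟩ := hUne
  obtain ⟨v, hv⟩ := hVne
  obtain ⟨i₁, j₁, h1⟩ := topIn U hU u hu
  obtain ⟨i₂, j₂, h2⟩ := topIn V hV v hv
  obtain ⟨a, ha⟩ := liftTo U hU i₁ j₁ h1 (max i₁ i₂) (le_max_left _ _)
  obtain ⟨b, hb⟩ := liftTo V hV i₂ j₂ h2 (max i₁ i₂) (le_max_right _ _)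
  obtain ⟨n₁, hn₁⟩ := jmate e horder hU ha
  obtain ⟨n₂, hn₂⟩ := jmate e horder hV hb
  refine ⟨jpt e (max i₁ i₂ + 1) (max n₁ n₂) ⊤, ?_, ?_⟩
  · exact (show ScottOpen U from hU).1
      (jpt_le_cross e horder (by exact_mod_cast le_max_left n₁ n₂)) hn₁
  · exact (show ScottOpen V from hV).1
      (jpt_le_cross e horder (by exact_mod_cast le_max_right n₁ n₂)) hn₂

end JiaMain
/-- Let `L` be Jia's dcpo `ℕ × ℕ × (ℕ ∪ {∞})` (with the order `LJiaLE`),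
carrying the Scott topology.  A closed set `A ⊆ L` is irreducible iff `A` is a principal ideal
`↓x` for some `x ∈ L`, or `A` is the whole space. -/
theorem stmt10 (L : Type) [PartialOrder L] [tL : TopologicalSpace L]
    (htop : tL = scottTop L) (e : L ≃ ℕ × ℕ × WithTop ℕ)
    (horder : ∀ a b : L, a ≤ b ↔ LJiaLE (e a) (e b)) :
    ∀ A : Set L, IsClosed A →
      (IsIrreducible A ↔ ((∃ x : L, A = {y : L | y ≤ x}) ∨ A = univ)) := by
  subst htop
  letI : TopologicalSpace L := scottTop L
  intro A hA
  constructor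
  · intro hirr
    by_cases hmax : ∃ x ∈ A, ∀ b ∈ A, b ≤ x
    · obtain ⟨x, hxA, hx⟩ := hmax
      refine Or.inl ⟨x, Set.Subset.antisymm (fun b hb => hx b hb) ?_⟩
      intro y hy
      exact jlower_of_closed e horder hA hy hxA
    · push_neg at hmax
      exact Or.inr (jmain e horder A hA hirr.1
        (isPreirreducible_iff_isClosed_union_isClosed.mp hirr.2) hmax)
  · rintro (⟨x, rfl⟩ | rfl)
    · refine ⟨⟨x, le_refl x⟩, ?_⟩
      rintro U V hU hV ⟨u, huA, huU⟩ ⟨v, hvA, hvV⟩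
      exact ⟨x, le_refl x, (show ScottOpen U from hU).1 huA huU,
        (show ScottOpen V from hV).1 hvA hvV⟩
    · refine ⟨⟨e.symm (0, 0, 0), trivial⟩, ?_⟩
      rintro U V hU hV ⟨u, -, huU⟩ ⟨v, -, hvV⟩
      obtain ⟨z, hz⟩ := jopen_meet e horder U V hU hV ⟨u, huU⟩ ⟨v, hvV⟩
      exact ⟨z, trivial, hz⟩
end

section
/- Let ℒ be the dcpo ℕ × ℕ × (ℕ ∪ {∞}) with the order described below, and Σℒ its Scott space. Then every family of nonempty compact saturated subsets of Σℒ that is filtered under reverse inclusion has nonempty intersection. -/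
open Set Topology TopologicalSpace

universe u v

/-! Write a point of `L` as `(level, column, height)`. A compact subset of `ΣL` meets only finitely
many levels, and if it lies on levels `≥ N` it meets only finitely many columns on level `N`: both
come from covers by directed families of Scott-open sets, which are easy to recognise because a
directed set whose supremum it does not contain climbs up the fibre of that supremum.

A monotone finite-set-valued function on a filtered family is constant below a member where its
cardinality is minimal. Applied to the sets of levels, it gives a member `K₁` of the family such
that every member meets the lowest level `N` of `K₁`; applied to the columns on level `N`, it gives
a column `j` met on level `N` by every member. The point `(N, j, ∞)` lies above the whole fibre
`(N, j)`, so it belongs to every member, saturated sets being upper sets. -/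

theorem exists_mem_forall_subset_of_directedOn {ι β : Type*} [Preorder ι] {s : Set ι}
    (hs : s.Nonempty) (hd : DirectedOn (· ≥ ·) s) {S : ι → Set β} (hS : Monotone S)
    (hfin : ∀ i ∈ s, (S i).Finite) : ∃ i₀ ∈ s, ∀ i ∈ s, S i₀ ⊆ S i := by
  obtain ⟨i₀, hi₀, hmin⟩ := exists_minimalFor_of_wellFoundedLT (· ∈ s) (fun i => (S i).ncard) hs
  refine ⟨i₀, hi₀, fun i hi => ?_⟩
  obtain ⟨j, hj, hji₀, hji⟩ := hd i₀ hi₀ i hi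
  have hsub : S j ⊆ S i₀ := hS hji₀
  have hcard : (S i₀).ncard ≤ (S j).ncard := hmin hj (ncard_le_ncard hsub (hfin i₀ hi₀))
  rw [← eq_of_subset_of_ncard_le hsub hcard (hfin i₀ hi₀)]
  exact hS hji

namespace LJiaLE

variable {p q r : ℕ × ℕ × WithTop ℕ}

theorem snd_fst_eq_of_fst_eq (h : LJiaLE p q) (hpq : p.1 = q.1) : p.2.1 = q.2.1 := by
  rcases h with h | h <;> omega

theorem fst_eq_of_le_of_fst_eq (h₁ : LJiaLE p q) (h₂ : LJiaLE q r) (hpr : p.1 = r.1) :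
    p.1 = q.1 := by
  rcases h₁ with h₁ | h₁ <;> rcases h₂ with h₂ | h₂ <;> omega

end LJiaLE

section ScottTopology

attribute [local instance] scottTop

theorem IsSat.isUpperSet {P : Type*} [Preorder P] {K : Set P} (hK : IsSat K) : IsUpperSet K :=
  hK ▸ isUpperSet_sInter fun U hU => (show ScottOpen U from hU.1).1

variable {L : Type*}

theorem exists_isGreatest_of_height_le [Preorder L] (e : L ≃ ℕ × ℕ × WithTop ℕ)
    (horder : ∀ a b : L, a ≤ b ↔ LJiaLE (e a) (e b)) {T : Set L} (hT : T.Nonempty) {i j : ℕ}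
    (hfibre : ∀ x ∈ T, (e x).1 = i ∧ (e x).2.1 = j) (m : ℕ) (hm : ∀ x ∈ T, (e x).2.2 ≤ m) :
    ∃ x₀, IsGreatest T x₀ := by
  have hsup : sSup ((fun x => (e x).2.2) '' T : Set ℕ∞) < ⊤ :=
    (sSup_le (forall_mem_image.2 hm)).trans_lt (ENat.natCast_lt_top m)
  obtain ⟨x₀, hx₀, hx₀max⟩ := (hT.image _).csSup_mem (ENat.finite_of_sSup_lt_top hsup)
  refine ⟨x₀, hx₀, fun x hx => (horder x x₀).2 (Or.inl ⟨?_, ?_, ?_⟩)⟩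
  · rw [(hfibre x hx).1, (hfibre x₀ hx₀).1]
  · rw [(hfibre x hx).2, (hfibre x₀ hx₀).2]
  · exact (le_sSup (mem_image_of_mem _ hx)).trans_eq hx₀max.symm

theorem exists_mem_fibre_height_ge_of_isLUB_of_notMem [PartialOrder L] (e : L ≃ ℕ × ℕ × WithTop ℕ)
    (horder : ∀ a b : L, a ≤ b ↔ LJiaLE (e a) (e b)) {d : Set L} (hd : d.Nonempty)
    (hdir : DirectedOn (· ≤ ·) d) {a : L} (ha : IsLUB d a) (had : a ∉ d) (m : ℕ) :
    ∃ x ∈ d, (e x).1 = (e a).1 ∧ (e x).2.1 = (e a).2.1 ∧ (m : WithTop ℕ) ≤ (e x).2.2 := by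
  by_contra! hlow
  suffices ∃ T ⊆ d, (∀ y ∈ d, ∃ z ∈ T, y ≤ z) ∧ ∃ x₀, IsGreatest T x₀ by
    obtain ⟨T, hTd, hcof, x₀, hx₀T, hx₀⟩ := this
    have hgreatest : IsGreatest d x₀ :=
      ⟨hTd hx₀T, fun y hy => let ⟨z, hz, hyz⟩ := hcof y hy; hyz.trans (hx₀ hz)⟩
    exact had (ha.unique hgreatest.isLUB ▸ hgreatest.1)
  by_cases hmeet : ∃ x₀ ∈ d, (e x₀).1 = (e a).1 ∧ (e x₀).2.1 = (e a).2.1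
  · obtain ⟨x₀, hx₀, hx₀a⟩ := hmeet
    refine ⟨{x ∈ d | (e x).1 = (e a).1 ∧ (e x).2.1 = (e a).2.1}, sep_subset _ _, ?_, ?_⟩
    · intro y hy
      obtain ⟨z, hz, hx₀z, hyz⟩ := hdir x₀ hx₀ y hy
      have hx₀z' := (horder x₀ z).1 hx₀z
      have hz₀ := hx₀z'.fst_eq_of_le_of_fst_eq ((horder z a).1 (ha.1 hz)) hx₀a.1
      exact ⟨z, ⟨hz, hz₀ ▸ hx₀a.1, hx₀z'.snd_fst_eq_of_fst_eq hz₀ ▸ hx₀a.2⟩, hyz⟩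
    · exact exists_isGreatest_of_height_le e horder ⟨x₀, hx₀, hx₀a⟩ (fun x hx => hx.2) m
        fun x hx => (hlow x hx.1 hx.2.1 hx.2.2).le
  · push Not at hmeet
    have hbelow : ∀ x ∈ d, (e a).1 = (e x).1 + 1 ∧ (e x).2.2 ≤ ((e a).2.1 : WithTop ℕ) := by
      intro x hx
      rcases (horder x a).1 (ha.1 hx) with h | h
      · exact absurd h.2.1 (hmeet x hx h.1)
      · exact ⟨h.1, h.2.1⟩
    obtain ⟨x₀, hx₀⟩ := hd
    refine ⟨d, subset_rfl, fun y hy => ⟨y, hy, le_rfl⟩,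
      exists_isGreatest_of_height_le e horder ⟨x₀, hx₀⟩ (i := (e x₀).1) (j := (e x₀).2.1)
        (fun x hx => ?_) (e a).2.1 fun x hx => (hbelow x hx).2⟩
    obtain ⟨z, hz, hx₀z, hxz⟩ := hdir x₀ hx₀ x hx
    have hlevel : (e x).1 = (e x₀).1 := by
      have := (hbelow x hx).1; have := (hbelow x₀ hx₀).1; omega
    have hlevel' : (e x).1 = (e z).1 := by
      have := (hbelow x hx).1; have := (hbelow z hz).1; omega
    refine ⟨hlevel, ?_⟩
    rw [((horder x z).1 hxz).snd_fst_eq_of_fst_eq hlevel',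
      ((horder x₀ z).1 hx₀z).snd_fst_eq_of_fst_eq (hlevel ▸ hlevel')]

theorem isOpen_of_isUpperSet_of_fibre [PartialOrder L] (e : L ≃ ℕ × ℕ × WithTop ℕ)
    (horder : ∀ a b : L, a ≤ b ↔ LJiaLE (e a) (e b)) {U : Set L} (hU : IsUpperSet U)
    (hfibre : ∀ a ∈ U, ∃ m : ℕ, ∀ x, (e x).1 = (e a).1 → (e x).2.1 = (e a).2.1 →
      (m : WithTop ℕ) ≤ (e x).2.2 → x ∈ U) : IsOpen U := by
  refine ⟨hU, fun d hd hdir a ha haU => ?_⟩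
  by_cases had : a ∈ d
  · exact ⟨a, had, haU⟩
  obtain ⟨m, hm⟩ := hfibre a haU
  obtain ⟨x, hxd, hx⟩ := exists_mem_fibre_height_ge_of_isLUB_of_notMem e horder hd hdir ha had m
  exact ⟨x, hxd, hm x hx.1 hx.2.1 hx.2.2⟩

theorem isOpen_setOf_le_col_and_le_height [PartialOrder L] (e : L ≃ ℕ × ℕ × WithTop ℕ)
    (horder : ∀ a b : L, a ≤ b ↔ LJiaLE (e a) (e b)) (c : ℕ → ℕ) :
    IsOpen {x : L | c (e x).1 ≤ (e x).2.1 ∧ (c ((e x).1 + 1) : WithTop ℕ) ≤ (e x).2.2} := by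
  refine isOpen_of_isUpperSet_of_fibre e horder (fun x y hxy hx => ?_)
    fun a ha => ⟨c ((e a).1 + 1), fun x h₁ h₂ h₃ => ⟨h₁ ▸ h₂ ▸ ha.1, h₁ ▸ h₃⟩⟩
  rcases (horder x y).1 hxy with ⟨h₁, h₂, h₃⟩ | ⟨h₁, h₂, h₃⟩
  · exact ⟨h₁ ▸ h₂ ▸ hx.1, h₁ ▸ hx.2.trans h₃⟩
  · exact ⟨h₁ ▸ Nat.cast_le.1 (hx.2.trans h₂), h₃ ▸ le_top⟩

theorem isOpen_setOf_lt_level_or_col_le [PartialOrder L] (e : L ≃ ℕ × ℕ × WithTop ℕ)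
    (horder : ∀ a b : L, a ≤ b ↔ LJiaLE (e a) (e b)) (N t : ℕ) :
    IsOpen {x : L | N < (e x).1 ∨ ((e x).1 = N ∧ (e x).2.1 ≤ t)} := by
  refine isOpen_of_isUpperSet_of_fibre e horder (fun x y hxy hx => ?_)
    fun a ha => ⟨0, fun x h₁ h₂ _ => by simp only [mem_ofPred_eq] at ha ⊢; omega⟩
  simp only [mem_ofPred_eq] at hx ⊢
  rcases (horder x y).1 hxy with ⟨h₁, h₂, -⟩ | ⟨h₁, -⟩ <;> omega

theorem IsCompact.finite_image_level [PartialOrder L] (e : L ≃ ℕ × ℕ × WithTop ℕ)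
    (horder : ∀ a b : L, a ≤ b ↔ LJiaLE (e a) (e b)) {K : Set L} (hK : IsCompact K) :
    ((fun x => (e x).1) '' K).Finite := by
  by_contra hinf
  have := e.nonempty
  choose! g hgK hg using fun m (hm : m ∈ (fun x => (e x).1) '' K) => hm
  -- the `n`-th open set of the cover misses the chosen point `g m` of every level `m > n`
  let c : ℕ → ℕ → ℕ := fun n m => if n < m then (e (g m)).2.1 + 1 else 0
  have hc : Antitone c := fun n n' h m => by dsimp only [c]; split_ifs <;> omega
  obtain ⟨n, hn⟩ := hK.elim_directed_cover
    (fun n => {x : L | c n (e x).1 ≤ (e x).2.1 ∧ (c n ((e x).1 + 1) : WithTop ℕ) ≤ (e x).2.2})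
    (fun n => isOpen_setOf_le_col_and_le_height e horder (c n))
    (fun x _ => mem_iUnion.2 ⟨(e x).1 + 1, by simp [c]⟩)
    (Monotone.directed_le fun n n' h x hx =>
      ⟨(hc h _).trans hx.1, (Nat.cast_le.2 (hc h _)).trans hx.2⟩)
  obtain ⟨m, hm, hnm⟩ := Set.Infinite.exists_gt hinf n
  have := (hn (hgK m hm)).1
  simp [c, hg m hm, hnm] at this

theorem IsCompact.finite_image_col_of_le_level [PartialOrder L] (e : L ≃ ℕ × ℕ × WithTop ℕ)
    (horder : ∀ a b : L, a ≤ b ↔ LJiaLE (e a) (e b)) {K : Set L} (hK : IsCompact K) {N : ℕ}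
    (hN : ∀ x ∈ K, N ≤ (e x).1) : ((fun x => (e x).2.1) '' {x ∈ K | (e x).1 = N}).Finite := by
  obtain ⟨t, ht⟩ := hK.elim_directed_cover
    (fun t => {x : L | N < (e x).1 ∨ ((e x).1 = N ∧ (e x).2.1 ≤ t)})
    (isOpen_setOf_lt_level_or_col_le e horder N)
    (fun x hx => mem_iUnion.2 ⟨(e x).2.1, by have := hN x hx; simp only [mem_ofPred_eq]; omega⟩)
    (Monotone.directed_le fun t t' h x hx => by simp only [mem_ofPred_eq] at hx ⊢; omega)
  refine (finite_Iic t).subset ?_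
  rintro _ ⟨x, ⟨hxK, hxN⟩, rfl⟩
  simpa [hxN] using ht hxK

end ScottTopology

/-- Let `L` be Jia's dcpo `ℕ × ℕ × (ℕ ∪ {∞})` (with the order `LJiaLE`),
carrying the Scott topology.  Every (nonempty) family of nonempty compact saturated subsets of
`ΣL` that is filtered under reverse inclusion has nonempty intersection. -/
theorem stmt11 (L : Type) [PartialOrder L] [tL : TopologicalSpace L]
    (htop : tL = scottTop L) (e : L ≃ ℕ × ℕ × WithTop ℕ)
    (horder : ∀ a b : L, a ≤ b ↔ LJiaLE (e a) (e b)) :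
    ∀ 𝒦 : Set (Set L), 𝒦.Nonempty →
      (∀ K ∈ 𝒦, K.Nonempty ∧ IsCompact K ∧ IsSat K) →
      (∀ K₁ ∈ 𝒦, ∀ K₂ ∈ 𝒦, ∃ K₃ ∈ 𝒦, K₃ ⊆ K₁ ∧ K₃ ⊆ K₂) →
      (⋂₀ 𝒦).Nonempty := by
  subst htop
  intro 𝒦 h𝒦 hprops hfilt
  obtain ⟨K₁, hK₁, hK₁levels⟩ := exists_mem_forall_subset_of_directedOn h𝒦 hfilt monotone_image
    fun K hK => (hprops K hK).2.1.finite_image_level e horder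
  set N := sInf ((fun x => (e x).1) '' K₁)
  have hN : N ∈ (fun x => (e x).1) '' K₁ := Nat.sInf_mem ((hprops K₁ hK₁).1.image _)
  let S : Set L → Set ℕ := fun K => (fun x => (e x).2.1) '' {x ∈ K ∩ K₁ | (e x).1 = N}
  have hS : Monotone S := fun K K' h =>
    image_mono fun x hx => ⟨⟨h hx.1.1, hx.1.2⟩, hx.2⟩
  obtain ⟨K₂, hK₂, hK₂cols⟩ := exists_mem_forall_subset_of_directedOn h𝒦 hfilt hS fun K _ =>
    ((hprops K₁ hK₁).2.1.finite_image_col_of_le_level e horder (N := N)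
      fun x hx => Nat.sInf_le (mem_image_of_mem (fun x => (e x).1) hx)).subset
      (image_mono fun x hx => ⟨hx.1.2, hx.2⟩)
  obtain ⟨j, hj⟩ : (S K₂).Nonempty := by
    obtain ⟨K₃, hK₃, h₃₂, h₃₁⟩ := hfilt K₂ hK₂ K₁ hK₁
    obtain ⟨x, hx, hxN⟩ := hK₁levels K₃ hK₃ hN
    exact ⟨_, mem_image_of_mem _ ⟨⟨h₃₂ hx, h₃₁ hx⟩, hxN⟩⟩
  refine ⟨e.symm (N, j, ⊤), fun K hK => ?_⟩
  obtain ⟨x, ⟨⟨hxK, -⟩, hxN⟩, rfl⟩ := hK₂cols K hK hj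
  exact (hprops K hK).2.2.isUpperSet ((horder _ _).2 (Or.inl (by simp [hxN]))) hxK
end

section
/- Let ℒ be the dcpo ℕ × ℕ × (ℕ ∪ {∞}) with the order described below. Then the Scott space Σℒ is well-filtered but not sober. -/
open Set Topology TopologicalSpace

universe u v

/-!
Write `(i, j, k)` for the points of `L`; for fixed `(i, j)` they form the chain `(i, j)`, with top
`(i, j, ∞)`. The only directed suprema not attained are the chain tops, so an upper set is Scott
open iff it contains a finite point of every chain whose top it contains. Hence an open set meeting
level `i` contains the tops of almost all chains on each level above `i`, so any two nonempty open
sets meet: `L` is irreducible, yet it is not the closure `↓z` of a point.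

A compact saturated set lives on finitely many levels and has only finitely many chain tops on its
lowest level; outside an open set `U` it has only finitely many points whose chain top is in `U`.
Given a filtered family `𝒦` with `⋂ 𝒦 ⊆ U`, the lowest level `i₀` of the members is constant below
some `K₁ ∈ 𝒦`, and Cantor's intersection theorem for the finite sets of tops on level `i₀` yields
a top in `⋂ 𝒦 ⊆ U`; so almost all tops above level `i₀` lie in `U`. Then `K₁ \ U` lies below
finitely many points outside `U`, each missed by some member of `𝒦`, and a member below all of
these lies in `U`.
-/

open Filter

lemma WithTop.eq_top_or_exists_natCast (k : WithTop ℕ) : k = ⊤ ∨ ∃ n : ℕ, k = n := by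
  induction k using WithTop.recTopCoe <;> simp

section FilteredFamilies

variable {X : Type*} {𝒦 : Set (Set X)}

lemma DirectedOn.mem_sInter_of_forall_subset (hdir : DirectedOn (· ⊇ ·) 𝒦) {K₁ : Set X}
    (hK₁ : K₁ ∈ 𝒦) {x : X} (hx : ∀ K ∈ 𝒦, K ⊆ K₁ → x ∈ K) : x ∈ ⋂₀ 𝒦 := fun K hK =>
  let ⟨K₃, hK₃, h3, h31⟩ := hdir K hK K₁ hK₁
  h3 (hx K₃ hK₃ h31)

lemma DirectedOn.exists_subset_disjoint (hdir : DirectedOn (· ⊇ ·) 𝒦) {K₁ : Set X}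
    (hK₁ : K₁ ∈ 𝒦) {F : Set X} (hF : F.Finite) (hF𝒦 : Disjoint F (⋂₀ 𝒦)) :
    ∃ K ∈ 𝒦, K ⊆ K₁ ∧ Disjoint K F := by
  have hc : DirectedOn (fun K K' => Kᶜ ⊆ K'ᶜ) {K ∈ 𝒦 | K ⊆ K₁} := by
    rintro K ⟨hK, hKK₁⟩ K' ⟨hK', -⟩
    obtain ⟨K₃, hK₃, h3, h3'⟩ := hdir K hK K' hK'
    exact ⟨K₃, ⟨hK₃, h3.trans hKK₁⟩, compl_subset_compl.mpr h3, compl_subset_compl.mpr h3'⟩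
  have hcover : (hF.toFinset : Set X) ⊆ ⋃ K ∈ {K ∈ 𝒦 | K ⊆ K₁}, Kᶜ := by
    intro x hx
    rw [Finite.coe_toFinset] at hx
    obtain ⟨K, hK, hxK⟩ := not_forall₂.mp (disjoint_left.mp hF𝒦 hx)
    obtain ⟨K₃, hK₃, h3, h31⟩ := hdir K hK K₁ hK₁
    exact mem_iUnion₂.mpr ⟨K₃, ⟨hK₃, h31⟩, fun hx₃ => hxK (h3 hx₃)⟩
  obtain ⟨K, ⟨hK, hKK₁⟩, hFK⟩ := hc.exists_mem_subset_of_finset_subset_biUnion (f := compl)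
    (by exact ⟨K₁, hK₁, subset_rfl⟩) hcover
  rw [Finite.coe_toFinset] at hFK
  exact ⟨K, hK, hKK₁, (subset_compl_iff_disjoint_right.mp hFK).symm⟩

end FilteredFamilies

section ScottTopology

attribute [local instance] scottTop

namespace ScottTop

variable {P : Type*} [Preorder P]

lemma isUpperSet_of_isOpen {U : Set P} (hU : IsOpen U) : IsUpperSet U := hU.1

lemma isLowerSet_of_isClosed {C : Set P} (hC : IsClosed C) : IsLowerSet C :=
  isUpperSet_compl.mp (isUpperSet_of_isOpen hC.isOpen_compl)

lemma isClosed_Iic (z : P) : IsClosed (Iic z) := by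
  refine ⟨fun x y hxy hx hy => hx (hxy.trans hy), fun d _ _ a ha haz => ?_⟩
  by_contra! hd
  exact haz (ha.2 fun x hx => by_contra fun hxz => hd.subset ⟨hx, hxz⟩)

lemma closure_singleton_subset_Iic (z : P) : closure {z} ⊆ Iic z :=
  closure_minimal (singleton_subset_iff.mpr le_rfl) (isClosed_Iic z)

lemma IsSat.isUpperSet {K : Set P} (hK : IsSat K) : IsUpperSet K := by
  rw [hK]
  exact isUpperSet_sInter fun U hU => isUpperSet_of_isOpen hU.1

end ScottTop

namespace JiaDcpo

section Points

variable {L : Type*} (e : L ≃ ℕ × ℕ × WithTop ℕ)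

def pt (i j : ℕ) (k : WithTop ℕ) : L := e.symm (i, j, k)

lemma exists_eq_pt (x : L) : ∃ i j k, x = pt e i j k :=
  ⟨_, _, _, (e.symm_apply_apply x).symm⟩

@[simp] lemma pt_inj {i j i' j' : ℕ} {k k' : WithTop ℕ} :
    pt e i j k = pt e i' j' k' ↔ i = i' ∧ j = j' ∧ k = k' := by
  simp [pt]

@[simp] lemma apply_pt (i j : ℕ) (k : WithTop ℕ) : e (pt e i j k) = (i, j, k) :=
  e.apply_symm_apply _

end Points

variable {L : Type*} [Preorder L] {e : L ≃ ℕ × ℕ × WithTop ℕ}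
  (ho : ∀ a b : L, a ≤ b ↔ LJiaLE (e a) (e b))
include ho

section Order

lemma pt_le_pt {i j i' j' : ℕ} {k k' : WithTop ℕ} :
    pt e i j k ≤ pt e i' j' k' ↔
      (i = i' ∧ j = j' ∧ k ≤ k') ∨ (i' = i + 1 ∧ k ≤ (j' : WithTop ℕ) ∧ k' = ⊤) := by
  rw [ho, apply_pt, apply_pt, LJiaLE]

lemma pt_le_pt_top (i j : ℕ) (k : WithTop ℕ) : pt e i j k ≤ pt e i j ⊤ :=
  (pt_le_pt ho).mpr (Or.inl ⟨rfl, rfl, le_top⟩)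

lemma pt_top_le_iff {i j : ℕ} {x : L} : pt e i j ⊤ ≤ x ↔ x = pt e i j ⊤ := by
  obtain ⟨i', j', k', rfl⟩ := exists_eq_pt e x
  simp [pt_le_pt ho, eq_comm]

lemma le_pt_natCast_iff {i j m : ℕ} {x : L} :
    x ≤ pt e i j m ↔ ∃ n : ℕ, n ≤ m ∧ x = pt e i j n := by
  obtain ⟨i', j', k', rfl⟩ := exists_eq_pt e x
  obtain rfl | ⟨k, rfl⟩ := k'.eq_top_or_exists_natCast
  · simp [pt_le_pt ho]
  · simp [pt_le_pt ho, eq_comm]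
    tauto

lemma pt_top_le_or_bddAbove (i j : ℕ) (a : L) :
    pt e i j ⊤ ≤ a ∨ ∃ b : ℕ, ∀ m : ℕ, pt e i j m ≤ a → m ≤ b := by
  obtain ⟨i', j', k', rfl⟩ := exists_eq_pt e a
  obtain rfl | ⟨k, rfl⟩ := k'.eq_top_or_exists_natCast
  · by_cases h : i = i' ∧ j = j'
    · exact Or.inl ((pt_le_pt ho).mpr (Or.inl ⟨h.1, h.2, le_rfl⟩))
    · refine Or.inr ⟨j', fun m hm => ?_⟩
      rcases (pt_le_pt ho).mp hm with ⟨h1, h2, -⟩ | ⟨-, hm, -⟩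
      · exact absurd ⟨h1, h2⟩ h
      · exact_mod_cast hm
  · refine Or.inr ⟨k, fun m hm => ?_⟩
    rcases (pt_le_pt ho).mp hm with ⟨-, -, hm⟩ | ⟨-, -, h⟩
    · exact_mod_cast hm
    · exact absurd h (WithTop.natCast_ne_top k)

lemma pt_top_le_of_forall_le {i j : ℕ} {a : L} (h : ∀ m : ℕ, pt e i j m ≤ a) :
    pt e i j ⊤ ≤ a :=
  (pt_top_le_or_bddAbove ho i j a).resolve_right fun ⟨b, hb⟩ =>
    (hb (b + 1) (h _)).not_gt b.lt_succ_self

lemma directedOn_cases {d : Set L} (hne : d.Nonempty) (hdir : DirectedOn (· ≤ ·) d) :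
    (∃ g ∈ d, ∀ x ∈ d, x ≤ g) ∨
      ∃ i j, (∀ x ∈ d, x ≤ pt e i j ⊤) ∧ ∀ n : ℕ, ∃ x ∈ d, pt e i j n ≤ x := by
  by_cases htop : ∃ i j, pt e i j ⊤ ∈ d
  · obtain ⟨i, j, ht⟩ := htop
    refine Or.inl ⟨_, ht, fun x hx => ?_⟩
    obtain ⟨z, -, hxz, htz⟩ := hdir x hx _ ht
    rwa [(pt_top_le_iff ho).mp htz] at hxz
  push Not at htop
  obtain ⟨x₀, hx₀⟩ := hne
  obtain ⟨i, j, k₀, rfl⟩ := exists_eq_pt e x₀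
  have hchain : ∀ x ∈ d, ∃ n : ℕ, x = pt e i j n := by
    intro x hx
    obtain ⟨z, hz, h₀z, hxz⟩ := hdir _ hx₀ x hx
    obtain ⟨i', j', k', rfl⟩ := exists_eq_pt e z
    obtain rfl | ⟨m, rfl⟩ := k'.eq_top_or_exists_natCast
    · exact absurd hz (htop i' j')
    obtain ⟨_, -, h₀⟩ := (le_pt_natCast_iff ho).mp h₀z
    obtain ⟨rfl, rfl, -⟩ := (pt_inj e).mp h₀
    obtain ⟨n, -, rfl⟩ := (le_pt_natCast_iff ho).mp hxz
    exact ⟨n, rfl⟩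
  by_cases hunb : ∀ n : ℕ, ∃ x ∈ d, pt e i j n ≤ x
  · refine Or.inr ⟨i, j, fun x hx => ?_, hunb⟩
    obtain ⟨n, rfl⟩ := hchain x hx
    exact pt_le_pt_top ho i j n
  push Not at hunb
  obtain ⟨N, hN⟩ := hunb
  have hfin : d.Finite := by
    refine ((finite_Iio N).image fun n : ℕ => pt e i j n).subset fun x hx => ?_
    obtain ⟨n, rfl⟩ := hchain x hx
    refine ⟨n, mem_Iio.mpr (lt_of_not_ge fun hn => hN _ hx ((pt_le_pt ho).mpr ?_)), rfl⟩
    exact Or.inl ⟨rfl, rfl, by exact_mod_cast hn⟩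
  obtain ⟨g, hg, hgmax⟩ := exists_max_image d (fun x => (e x).2.2) hfin ⟨_, hx₀⟩
  refine Or.inl ⟨g, hg, fun x hx => ?_⟩
  obtain ⟨n, rfl⟩ := hchain x hx
  obtain ⟨m, rfl⟩ := hchain g hg
  exact (pt_le_pt ho).mpr (Or.inl ⟨rfl, rfl, by simpa using hgmax _ hx⟩)

end Order

section Topology

lemma isOpen_iff {U : Set L} :
    IsOpen U ↔ IsUpperSet U ∧ ∀ i j, pt e i j ⊤ ∈ U → ∃ n : ℕ, pt e i j n ∈ U := by
  refine ⟨fun hU => ⟨hU.1, fun i j ht => ?_⟩,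
    fun ⟨hup, hU⟩ => ⟨hup, fun d hne hdir a ha haU => ?_⟩⟩
  · have hmono : Monotone fun n : ℕ => pt e i j n := fun m n hmn =>
      (pt_le_pt ho).mpr (Or.inl ⟨rfl, rfl, by exact_mod_cast hmn⟩)
    have hlub : IsLUB (range fun n : ℕ => pt e i j n) (pt e i j ⊤) :=
      ⟨forall_mem_range.mpr fun n => pt_le_pt_top ho i j n,
        fun b hb => pt_top_le_of_forall_le ho fun m => hb (mem_range_self m)⟩
    obtain ⟨_, ⟨n, rfl⟩, hn⟩ :=
      hU.2 _ (range_nonempty _) (directedOn_range.mpr hmono.directed_le) _ hlub ht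
    exact ⟨n, hn⟩
  · rcases directedOn_cases ho hne hdir with ⟨g, hg, hgd⟩ | ⟨i, j, hub, hcof⟩
    · exact ⟨g, hg, hup (ha.2 hgd) haU⟩
    · obtain ⟨n, hn⟩ := hU i j (hup (ha.2 hub) haU)
      obtain ⟨x, hx, hnx⟩ := hcof n
      exact ⟨x, hx, hup hnx hn⟩

lemma isClosed_iff {C : Set L} :
    IsClosed C ↔ IsLowerSet C ∧ ∀ i j, (∀ n : ℕ, pt e i j n ∈ C) → pt e i j ⊤ ∈ C := by
  rw [← isOpen_compl_iff, isOpen_iff ho, isUpperSet_compl]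
  simp only [mem_compl_iff, not_imp_comm (a := pt e _ _ ⊤ ∈ C), not_exists_not]

lemma eventually_top_mem_succ {U : Set L} (hU : IsOpen U) {i j : ℕ} {k : WithTop ℕ}
    (hx : pt e i j k ∈ U) : ∀ᶠ j' in atTop, pt e (i + 1) j' ⊤ ∈ U := by
  obtain ⟨hup, hcrit⟩ := (isOpen_iff ho).mp hU
  obtain ⟨n, hn⟩ : ∃ n : ℕ, pt e i j n ∈ U := by
    obtain rfl | ⟨n, rfl⟩ := k.eq_top_or_exists_natCast
    exacts [hcrit i j hx, ⟨n, hx⟩]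
  filter_upwards [eventually_ge_atTop n] with j' hj'
  exact hup ((pt_le_pt ho).mpr (Or.inr ⟨rfl, by exact_mod_cast hj', rfl⟩)) hn

lemma eventually_top_mem {U : Set L} (hU : IsOpen U) {i₀ j₀ : ℕ} {k₀ : WithTop ℕ}
    (hx : pt e i₀ j₀ k₀ ∈ U) {i : ℕ} (hi : i₀ < i) : ∀ᶠ j in atTop, pt e i j ⊤ ∈ U := by
  induction i, hi using Nat.le_induction with
  | base => exact eventually_top_mem_succ ho hU hx
  | succ i _ ih =>
    obtain ⟨j, hj⟩ := ih.exists
    exact eventually_top_mem_succ ho hU hj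

lemma isPreirreducible_univ : IsPreirreducible (univ : Set L) := by
  rintro u v hu hv ⟨x, -, hx⟩ ⟨y, -, hy⟩
  obtain ⟨i, j, k, rfl⟩ := exists_eq_pt e x
  obtain ⟨i', j', k', rfl⟩ := exists_eq_pt e y
  obtain ⟨c, hcu, hcv⟩ :=
    ((eventually_top_mem ho hu hx (Nat.lt_succ_of_le (le_max_left i i'))).and
      (eventually_top_mem ho hv hy (Nat.lt_succ_of_le (le_max_right i i')))).exists
  exact ⟨_, mem_univ _, hcu, hcv⟩

theorem not_soberSp : ¬ SoberSp L := by
  intro hsober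
  obtain ⟨z, hz, -⟩ :=
    hsober univ isClosed_univ ⟨⟨pt e 0 0 0, mem_univ _⟩, isPreirreducible_univ ho⟩
  obtain ⟨i, j, k, rfl⟩ := exists_eq_pt e z
  have hle : pt e (i + 1) 0 ⊤ ≤ pt e i j k :=
    ScottTop.closure_singleton_subset_Iic _ (hz ▸ mem_univ _)
  rcases (pt_le_pt ho).mp hle with ⟨h, -⟩ | ⟨h, -⟩ <;> omega

end Topology

section Compact

lemma isClosed_union_lowerClosure {A B : Set L} (hB : IsClosed B)
    (hA : ∀ z ∉ B, {a ∈ A | z ≤ a}.Finite) : IsClosed (B ∪ lowerClosure A) := by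
  have hBlow := ScottTop.isLowerSet_of_isClosed hB
  refine (isClosed_iff ho).mpr ⟨hBlow.union (lowerClosure A).lower, fun i j hall => ?_⟩
  by_cases hB' : ∀ n : ℕ, pt e i j n ∈ B
  · exact Or.inl (((isClosed_iff ho).mp hB).2 i j hB')
  push Not at hB'
  obtain ⟨n₀, hn₀⟩ := hB'
  have hchain_le {m : ℕ} (hm : n₀ ≤ m) : pt e i j n₀ ≤ pt e i j m :=
    (pt_le_pt ho).mpr (Or.inl ⟨rfl, rfl, by exact_mod_cast hm⟩)
  set S := {a ∈ A | pt e i j n₀ ≤ a}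
  by_contra htop
  have hbdd : ∀ a ∈ S, ∃ b : ℕ, ∀ m : ℕ, pt e i j m ≤ a → m ≤ b := fun a ha =>
    (pt_top_le_or_bddAbove ho i j a).resolve_left fun h => htop (Or.inr ⟨a, ha.1, h⟩)
  choose! b hb using hbdd
  obtain ⟨N, hN⟩ := ((hA _ hn₀).image b).bddAbove
  have hm : pt e i j (max n₀ (N + 1) : ℕ) ∉ B :=
    fun h => hn₀ (hBlow (hchain_le (le_max_left _ _)) h)
  obtain ⟨a, haA, hma⟩ := (hall _).resolve_left hm
  have haS : a ∈ S := ⟨haA, (hchain_le (le_max_left _ _)).trans hma⟩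
  have := (hb a haS _ hma).trans (hN (mem_image_of_mem b haS))
  omega

lemma finite_of_subset_isCompact {K A B : Set L} (hK : IsCompact K) (hAK : A ⊆ K)
    (hB : IsClosed B) (hKB : Disjoint K B) (hA : ∀ z ∉ B, {a ∈ A | z ≤ a}.Finite) :
    A.Finite := by
  by_contra hinf
  obtain ⟨y, hyK, hy⟩ :=
    Set.Infinite.exists_accPt_cofinite_inf_principal_of_subset_isCompact hinf hK hAK
  have hyB : y ∉ B := disjoint_left.mp hKB hyK
  -- `y` lies in the closed set `B ∪ ↓A'`, where `A'` omits the finitely many elements above `y`.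
  set A' := {a ∈ A | y ≤ a}ᶜ ∩ A
  have hA' : A' ∈ cofinite ⊓ 𝓟 A :=
    inter_mem_inf (hA y hyB).compl_mem_cofinite (mem_principal_self A)
  have hclosed : IsClosed (B ∪ lowerClosure A') :=
    isClosed_union_lowerClosure ho hB fun z hz => (hA z hz).subset fun a ha => ⟨ha.1.2, ha.2⟩
  have hyA' : y ∈ closure A' :=
    mem_closure_iff_clusterPt.mpr (hy.clusterPt.mono (le_principal_iff.mpr hA'))
  rcases hclosed.closure_subset_iff.mpr (subset_union_right.trans' subset_lowerClosure) hyA'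
    with hyB' | ⟨a, ⟨haS, haA⟩, hya⟩
  exacts [hyB hyB', haS ⟨haA, hya⟩]

lemma finite_levels {K : Set L} (hK : IsCompact K) : {i | ∃ j k, pt e i j k ∈ K}.Finite := by
  choose! j k hjk using fun i (hi : i ∈ {i | ∃ j k, pt e i j k ∈ K}) => hi
  set r : ℕ → L := fun i => pt e i (j i) (k i)
  have hr : InjOn r {i | ∃ j k, pt e i j k ∈ K} := fun i _ i' _ h => ((pt_inj e).mp h).1
  refine Finite.of_finite_image (finite_of_subset_isCompact ho hK (image_subset_iff.mpr hjk)
    isClosed_empty (disjoint_empty K) fun z _ => ?_) hr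
  obtain ⟨i, j', k', rfl⟩ := exists_eq_pt e z
  refine ((finite_Icc i (i + 1)).image r).subset ?_
  rintro _ ⟨⟨i', -, rfl⟩, hle⟩
  refine mem_image_of_mem r ?_
  rcases (pt_le_pt ho).mp hle with ⟨h, -⟩ | ⟨h, -⟩ <;> simp [h]

lemma isClosed_level_lt (i₀ : ℕ) : IsClosed {x : L | (e x).1 < i₀} := by
  refine (isClosed_iff ho).mpr ⟨fun x y hxy hy => ?_, fun i j hall => by simpa using hall 0⟩
  obtain ⟨i, j, k, rfl⟩ := exists_eq_pt e x
  obtain ⟨i', j', k', rfl⟩ := exists_eq_pt e y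
  simp only [mem_ofPred_eq, apply_pt] at hy ⊢
  rcases (pt_le_pt ho).mp hxy with ⟨h, -⟩ | ⟨h, -⟩ <;> omega

lemma finite_tops_of_level_ge {K : Set L} (hK : IsCompact K) {i₀ : ℕ}
    (hlev : ∀ i j k, pt e i j k ∈ K → i₀ ≤ i) : {j | pt e i₀ j ⊤ ∈ K}.Finite := by
  refine Finite.of_finite_image (finite_of_subset_isCompact ho hK
    (image_subset_iff.mpr fun _ h => h) (isClosed_level_lt ho i₀) ?_ fun z hz => ?_)
    fun j _ j' _ h => ((pt_inj e).mp h).2.1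
  · refine disjoint_left.mpr fun x hx hlt => ?_
    obtain ⟨i, j, k, rfl⟩ := exists_eq_pt e x
    have := hlev i j k hx
    simp only [mem_ofPred_eq, apply_pt] at hlt
    omega
  · obtain ⟨i, j, k, rfl⟩ := exists_eq_pt e z
    simp only [mem_ofPred_eq, apply_pt, not_lt] at hz
    refine (finite_singleton (pt e i₀ j ⊤)).subset ?_
    rintro _ ⟨⟨j', -, rfl⟩, hle⟩
    rcases (pt_le_pt ho).mp hle with ⟨-, h, -⟩ | ⟨h, -⟩
    · simp [h]
    · omega

end Compact

section WellFiltered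

lemma exists_lowest_level {𝒦 : Set (Set L)} (h𝒦 : 𝒦.Nonempty) (hKne : ∀ K ∈ 𝒦, K.Nonempty)
    (hcpt : ∀ K ∈ 𝒦, IsCompact K) (hdir : DirectedOn (· ⊇ ·) 𝒦) :
    ∃ i₀, ∃ K₁ ∈ 𝒦, (∀ i j k, pt e i j k ∈ K₁ → i₀ ≤ i) ∧
      ∀ K ∈ 𝒦, K ⊆ K₁ → ∃ j k, pt e i₀ j k ∈ K := by
  obtain ⟨K₀, hK₀⟩ := h𝒦
  obtain ⟨N, hN⟩ := (finite_levels ho (hcpt K₀ hK₀)).bddAbove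
  set M := {i | ∃ K ∈ 𝒦, ∀ i' j k, pt e i' j k ∈ K → i ≤ i'}
  have hM : BddAbove M := by
    refine ⟨N, fun i ⟨K, hK, hi⟩ => ?_⟩
    obtain ⟨K₃, hK₃, h3, h30⟩ := hdir K hK K₀ hK₀
    obtain ⟨x, hx⟩ := hKne K₃ hK₃
    obtain ⟨i', j, k, rfl⟩ := exists_eq_pt e x
    exact (hi i' j k (h3 hx)).trans (hN ⟨j, k, h30 hx⟩)
  obtain ⟨K₁, hK₁, hlev⟩ := Nat.sSup_mem (s := M) ⟨0, K₀, hK₀, fun _ _ _ _ => Nat.zero_le _⟩ hM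
  refine ⟨sSup M, K₁, hK₁, hlev, fun K hK hKK₁ => ?_⟩
  by_contra! h
  have hsucc : sSup M + 1 ∈ M := ⟨K, hK, fun i j k hx =>
    (hlev i j k (hKK₁ hx)).lt_of_ne fun h' => h j k (h' ▸ hx)⟩
  exact (le_csSup hM hsucc).not_gt (Nat.lt_succ_self _)

lemma exists_top_mem_sInter {𝒦 : Set (Set L)} (hcpt : ∀ K ∈ 𝒦, IsCompact K)
    (hup : ∀ K ∈ 𝒦, IsUpperSet K) (hdir : DirectedOn (· ⊇ ·) 𝒦) {K₁ : Set L} (hK₁ : K₁ ∈ 𝒦)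
    {i₀ : ℕ} (hlev : ∀ i j k, pt e i j k ∈ K₁ → i₀ ≤ i)
    (hmeet : ∀ K ∈ 𝒦, K ⊆ K₁ → ∃ j k, pt e i₀ j k ∈ K) :
    ∃ j₀, pt e i₀ j₀ ⊤ ∈ ⋂₀ 𝒦 := by
  set 𝒯 := (fun K => {j | pt e i₀ j ⊤ ∈ K}) '' {K ∈ 𝒦 | K ⊆ K₁}
  have : Nonempty 𝒯 := ⟨_, K₁, ⟨hK₁, subset_rfl⟩, rfl⟩
  have h𝒯dir : DirectedOn (· ⊇ ·) 𝒯 := by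
    rintro _ ⟨K, ⟨hK, hKK₁⟩, rfl⟩ _ ⟨K', ⟨hK', -⟩, rfl⟩
    obtain ⟨K₃, hK₃, h3, h3'⟩ := hdir K hK K' hK'
    exact ⟨_, ⟨K₃, ⟨hK₃, h3.trans hKK₁⟩, rfl⟩, fun j hj => h3 hj, fun j hj => h3' hj⟩
  have h𝒯ne : ∀ T ∈ 𝒯, T.Nonempty := by
    rintro _ ⟨K, ⟨hK, hKK₁⟩, rfl⟩
    obtain ⟨j, k, hx⟩ := hmeet K hK hKK₁
    exact ⟨j, hup K hK (pt_le_pt_top ho i₀ j k) hx⟩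
  have h𝒯fin : ∀ T ∈ 𝒯, T.Finite := by
    rintro _ ⟨K, ⟨hK, hKK₁⟩, rfl⟩
    exact finite_tops_of_level_ge ho (hcpt K hK) fun i j k hx => hlev i j k (hKK₁ hx)
  obtain ⟨j₀, hj₀⟩ := IsCompact.nonempty_sInter_of_directed_nonempty_isCompact_isClosed h𝒯dir
    h𝒯ne (fun T hT => (h𝒯fin T hT).isCompact) fun T _ => isClosed_discrete T
  exact ⟨j₀, hdir.mem_sInter_of_forall_subset hK₁ fun K hK hKK₁ => hj₀ _ ⟨K, ⟨hK, hKK₁⟩, rfl⟩⟩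

lemma finite_tops_mem_diff {K U : Set L} (hK : IsCompact K) {i₀ : ℕ}
    (hlev : ∀ i j k, pt e i j k ∈ K → i₀ ≤ i) (hU : IsOpen U) {j₀ : ℕ}
    (hj₀ : pt e i₀ j₀ ⊤ ∈ U) : {p : ℕ × ℕ | pt e p.1 p.2 ⊤ ∈ K \ U}.Finite := by
  obtain ⟨N, hN⟩ := (finite_levels ho hK).bddAbove
  choose! c hc using fun i (hi : i₀ < i) => eventually_atTop.mp (eventually_top_mem ho hU hj₀ hi)
  refine (((finite_singleton i₀).prod (finite_tops_of_level_ge ho hK hlev)).union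
    ((finite_Icc 0 N).biUnion fun i _ => (finite_singleton i).prod (finite_Iio (c i)))).subset ?_
  rintro ⟨i, j⟩ ⟨hK', hU'⟩
  rcases (hlev i j ⊤ hK').eq_or_lt with rfl | hi
  · exact Or.inl ⟨rfl, hK'⟩
  · exact Or.inr (mem_biUnion (mem_Icc.mpr ⟨Nat.zero_le _, hN ⟨j, ⊤, hK'⟩⟩)
      ⟨rfl, lt_of_not_ge fun hj => hU' (hc i hi j hj)⟩)

lemma exists_finite_diff_subset_lowerClosure {K U : Set L} (hK : IsCompact K)
    (hKup : IsUpperSet K) (hU : IsOpen U)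
    (htops : {p : ℕ × ℕ | pt e p.1 p.2 ⊤ ∈ K \ U}.Finite) :
    ∃ F : Set L, F.Finite ∧ Disjoint F U ∧ K \ U ⊆ lowerClosure F := by
  obtain ⟨hup, hcrit⟩ := (isOpen_iff ho).mp hU
  set A := {x ∈ K \ U | ∃ i j : ℕ, ∃ n : ℕ, x = pt e i j n ∧ pt e i j ⊤ ∈ U}
  have hA : A.Finite := by
    refine finite_of_subset_isCompact ho hK (fun x hx => hx.1.1) isClosed_empty
      (disjoint_empty K) fun z _ => ?_
    obtain ⟨i, j, k, rfl⟩ := exists_eq_pt e z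
    by_cases ht : pt e i j ⊤ ∈ U
    · obtain ⟨N, hN⟩ := hcrit i j ht
      refine ((finite_Iio N).image fun n : ℕ => pt e i j n).subset ?_
      rintro _ ⟨⟨⟨-, hxU⟩, i', j', n, rfl, -⟩, hle⟩
      obtain ⟨m, -, h⟩ := (le_pt_natCast_iff ho).mp hle
      obtain ⟨rfl, rfl, -⟩ := (pt_inj e).mp h
      refine ⟨n, mem_Iio.mpr (lt_of_not_ge fun hn => hxU (hup ?_ hN)), rfl⟩
      exact (pt_le_pt ho).mpr (Or.inl ⟨rfl, rfl, by exact_mod_cast hn⟩)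
    · refine finite_empty.subset ?_
      rintro _ ⟨⟨-, i', j', n, rfl, ht'⟩, hle⟩
      obtain ⟨m, -, h⟩ := (le_pt_natCast_iff ho).mp hle
      obtain ⟨rfl, rfl, -⟩ := (pt_inj e).mp h
      exact ht ht'
  refine ⟨(fun p : ℕ × ℕ => pt e p.1 p.2 ⊤) '' {p | pt e p.1 p.2 ⊤ ∈ K \ U} ∪ A,
    (htops.image _).union hA, disjoint_left.mpr ?_, fun x hx => ?_⟩
  · rintro _ (⟨p, ⟨-, hp⟩, rfl⟩ | ⟨⟨-, hx⟩, -⟩)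
    exacts [hp, hx]
  obtain ⟨i, j, k, rfl⟩ := exists_eq_pt e x
  by_cases ht : pt e i j ⊤ ∈ U
  · obtain rfl | ⟨n, rfl⟩ := k.eq_top_or_exists_natCast
    · exact absurd ht hx.2
    · exact ⟨_, Or.inr ⟨hx, i, j, n, rfl, ht⟩, le_rfl⟩
  · exact ⟨_, Or.inl ⟨(i, j), ⟨hKup (pt_le_pt_top ho i j k) hx.1, ht⟩, rfl⟩,
      pt_le_pt_top ho i j k⟩

theorem wellFiltered : WellFiltered L := by
  intro 𝒦 hne h𝒦 (hdir : DirectedOn (· ⊇ ·) 𝒦) U hU hsub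
  have hcpt K hK : IsCompact K := (h𝒦 K hK).2.1
  have hup K hK : IsUpperSet K := ScottTop.IsSat.isUpperSet (h𝒦 K hK).2.2
  obtain ⟨i₀, K₁, hK₁, hlev, hmeet⟩ :=
    exists_lowest_level ho hne (fun K hK => (h𝒦 K hK).1) hcpt hdir
  obtain ⟨j₀, hj₀⟩ := exists_top_mem_sInter ho hcpt hup hdir hK₁ hlev hmeet
  obtain ⟨F, hF, hFU, hK₁F⟩ := exists_finite_diff_subset_lowerClosure ho (hcpt K₁ hK₁)
    (hup K₁ hK₁) hU (finite_tops_mem_diff ho (hcpt K₁ hK₁) hlev hU (hsub hj₀))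
  obtain ⟨K, hK, hKK₁, hKF⟩ := hdir.exists_subset_disjoint hK₁ hF (hFU.mono_right hsub)
  refine ⟨K, hK, fun x hx => by_contra fun hxU => ?_⟩
  obtain ⟨y, hyF, hxy⟩ := hK₁F ⟨hKK₁ hx, hxU⟩
  exact disjoint_left.mp hKF (hup K hK hxy hx) hyF

end WellFiltered

end JiaDcpo

end ScottTopology

/-- Let `L` be Jia's dcpo `ℕ × ℕ × (ℕ ∪ {∞})` (with the order `LJiaLE`),
carrying the Scott topology.  Then `ΣL` is well-filtered but not sober. -/
theorem stmt12 (L : Type) [PartialOrder L] [tL : TopologicalSpace L]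
    (htop : tL = scottTop L) (e : L ≃ ℕ × ℕ × WithTop ℕ)
    (horder : ∀ a b : L, a ≤ b ↔ LJiaLE (e a) (e b)) :
    WellFiltered L ∧ ¬ SoberSp L := by
  subst htop
  exact ⟨JiaDcpo.wellFiltered horder, JiaDcpo.not_soberSp horder⟩
end

section
/- Let X be a T₀ space. If the Smyth power space P_S(X) is a Rudin space, then X is a Rudin space. -/
open Set Topology TopologicalSpace

universe u v

section Stmt17Aux

variable {X : Type u} [TopologicalSpace X]

/-- The basic open set `□U` of the upper Vietoris topology. -/
def boxKS (U : Set X) : Set (KS X) := {K : KS X | K.1 ⊆ U}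

/-- `◇A`. -/
def diaKS (A : Set X) : Set (KS X) := {K : KS X | (K.1 ∩ A).Nonempty}

lemma boxKS_open {U : Set X} (hU : IsOpen U) :
    @IsOpen (KS X) (upperVietoris X) (boxKS U) :=
  TopologicalSpace.GenerateOpen.basic _ ⟨U, hU, rfl⟩

lemma exists_boxKS {𝒰 : Set (KS X)} (h : @IsOpen (KS X) (upperVietoris X) 𝒰) :
    ∀ K ∈ 𝒰, ∃ U : Set X, IsOpen U ∧ K.1 ⊆ U ∧ boxKS U ⊆ 𝒰 := by
  have h' : TopologicalSpace.GenerateOpen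
      {S : Set (KS X) | ∃ U : Set X, IsOpen U ∧ S = {K : KS X | K.1 ⊆ U}} 𝒰 := h
  clear h
  induction h' with
  | basic s hs =>
      intro K hK
      obtain ⟨U, hU, rfl⟩ := hs
      exact ⟨U, hU, hK, subset_rfl⟩
  | univ =>
      intro K _
      exact ⟨univ, isOpen_univ, subset_univ _, subset_univ _⟩
  | inter s t _ _ ihs iht =>
      intro K hK
      obtain ⟨U, hU, hKU, hbU⟩ := ihs K hK.1
      obtain ⟨V, hV, hKV, hbV⟩ := iht K hK.2
      refine ⟨U ∩ V, hU.inter hV, subset_inter hKU hKV, fun L hL => ?_⟩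
      exact ⟨hbU fun x hx => (hL hx).1, hbV fun x hx => (hL hx).2⟩
  | sUnion S _ ih =>
      rintro K ⟨s, hs, hKs⟩
      obtain ⟨U, hU, hKU, hb⟩ := ih s hs K hKs
      exact ⟨U, hU, hKU, fun L hL => ⟨s, hs, hb hL⟩⟩

lemma mem_satPt_self (a : X) : a ∈ satPt a :=
  Set.mem_sInter.2 fun _ hU => hU.2

lemma satPt_subset {a : X} {U : Set X} (hU : IsOpen U) (ha : a ∈ U) : satPt a ⊆ U :=
  Set.sInter_subset_of_mem ⟨hU, ha⟩

lemma satPt_compact (a : X) : IsCompact (satPt a) := by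
  apply isCompact_of_finite_subcover
  intro ι U hU hcov
  obtain ⟨i, hi⟩ := Set.mem_iUnion.1 (hcov (mem_satPt_self a))
  exact ⟨{i}, by simpa using satPt_subset (hU i) hi⟩

lemma satPt_sat (a : X) : IsSat (satPt a) := by
  apply subset_antisymm
  · exact subset_sInter fun U hU => hU.2
  · exact Set.sInter_subset_sInter fun U hU => ⟨hU.1, satPt_subset hU.1 hU.2⟩

/-- The point closure `↑a` as an element of `KS X`. -/
def ptKS (a : X) : KS X :=
  ⟨satPt a, ⟨a, mem_satPt_self a⟩, satPt_compact a, satPt_sat a⟩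

lemma diaKS_closed {A : Set X} (hA : IsClosed A) :
    @IsClosed (KS X) (upperVietoris X) (diaKS A) := by
  letI := upperVietoris X
  have hco : (diaKS A)ᶜ = boxKS Aᶜ := by
    ext K
    constructor
    · intro hK x hx
      exact fun hxA => hK ⟨x, hx, hxA⟩
    · rintro hK ⟨x, hxK, hxA⟩
      exact hK hxK hxA
  exact ⟨hco ▸ boxKS_open hA.isOpen_compl⟩

lemma diaKS_irred {A : Set X} (hA : IsIrreducible A) :
    @IsIrreducible (KS X) (upperVietoris X) (diaKS A) := by
  letI := upperVietoris X
  obtain ⟨⟨a, ha⟩, hpre⟩ := hA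
  constructor
  · exact ⟨ptKS a, a, mem_satPt_self a, ha⟩
  · rintro 𝒰 𝒱 h𝒰 h𝒱 ⟨K₁, hK₁A, hK₁U⟩ ⟨K₂, hK₂A, hK₂V⟩
    obtain ⟨U, hUo, hKU, hbU⟩ := exists_boxKS h𝒰 K₁ hK₁U
    obtain ⟨V, hVo, hKV, hbV⟩ := exists_boxKS h𝒱 K₂ hK₂V
    obtain ⟨x, hxK, hxA⟩ := hK₁A
    obtain ⟨y, hyK, hyA⟩ := hK₂A
    obtain ⟨z, hzA, hzU, hzV⟩ := hpre U V hUo hVo ⟨x, hxA, hKU hxK⟩ ⟨y, hyA, hKV hyK⟩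
    exact ⟨ptKS z, ⟨z, mem_satPt_self z, hzA⟩,
      hbU (satPt_subset hUo hzU), hbV (satPt_subset hVo hzV)⟩

lemma unionKS_compact {𝒬 : Set (KS X)}
    (hc : @IsCompact (KS X) (upperVietoris X) 𝒬) :
    IsCompact (⋃ K ∈ 𝒬, K.1) := by
  classical
  letI := upperVietoris X
  apply isCompact_of_finite_subcover
  intro ι U hU hcov
  have hfin : ∀ K ∈ 𝒬, ∃ t : Finset ι, K.1 ⊆ ⋃ i ∈ t, U i := fun K hK =>
    K.2.2.1.elim_finite_subcover U hU ((Set.subset_biUnion_of_mem hK).trans hcov)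
  choose t ht using hfin
  have hQcov : 𝒬 ⊆ ⋃ s : Finset ι, boxKS (⋃ i ∈ s, U i) := fun K hK =>
    Set.mem_iUnion.2 ⟨t K hK, ht K hK⟩
  obtain ⟨S, hS⟩ := hc.elim_finite_subcover (fun s : Finset ι => boxKS (⋃ i ∈ s, U i))
    (fun s => boxKS_open (isOpen_biUnion fun i _ => hU i)) hQcov
  refine ⟨S.sup id, ?_⟩
  rintro x hx
  obtain ⟨K, hK𝒬, hxK⟩ := Set.mem_iUnion₂.1 hx
  obtain ⟨s, hsS, hKs⟩ := Set.mem_iUnion₂.1 (hS hK𝒬)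
  obtain ⟨i, his, hxi⟩ := Set.mem_iUnion₂.1 (hKs hxK)
  exact Set.mem_iUnion₂.2 ⟨i, Finset.le_sup (f := id) hsS his, hxi⟩

lemma unionKS_sat (𝒬 : Set (KS X)) : IsSat (⋃ K ∈ 𝒬, K.1) := by
  apply subset_antisymm
  · exact subset_sInter fun U hU => hU.2
  · intro x hx
    by_contra hxn
    have hex : ∀ K ∈ 𝒬, ∃ U : Set X, (IsOpen U ∧ K.1 ⊆ U) ∧ x ∉ U := by
      intro K hK
      have hxK : x ∉ K.1 := fun hxK => hxn (Set.mem_biUnion hK hxK)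
      rw [K.2.2.2] at hxK
      simp only [Set.mem_sInter, not_forall] at hxK
      obtain ⟨U, hU, hxU⟩ := hxK
      exact ⟨U, hU, hxU⟩
    choose! V hV hxV using hex
    have hopen : IsOpen (⋃ K ∈ 𝒬, V K) := isOpen_biUnion fun K hK => (hV K hK).1
    have hsub : (⋃ K ∈ 𝒬, K.1) ⊆ ⋃ K ∈ 𝒬, V K :=
      Set.iUnion₂_mono fun K hK => (hV K hK).2
    have := Set.mem_sInter.1 hx _ ⟨hopen, hsub⟩
    obtain ⟨K, hK𝒬, hxVK⟩ := Set.mem_iUnion₂.1 this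
    exact hxV K hK𝒬 hxVK

end Stmt17Aux

/-- Let `X` be a `T₀` space.  If the Smyth power space `P_S(X)` is a Rudin
space, then `X` is a Rudin space. -/
theorem stmt17 {X : Type u} [TopologicalSpace X] [T0Space X]
    (h : @RudinSpace (KS X) (upperVietoris X)) :
    RudinSpace X := by
  intro A hA hAirr
  letI := upperVietoris X
  obtain ⟨-, 𝒦, h𝒦ne, h𝒦mem, h𝒦dir, h𝒦meet, h𝒦min⟩ :=
    h (diaKS A) (diaKS_closed hA) (diaKS_irred hAirr)
  set F : Set (KS X) → Set X := fun 𝒬 => ⋃ K ∈ 𝒬, K.1 with hF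
  refine ⟨hA, F '' 𝒦, h𝒦ne.image F, ?_, ?_, ?_, ?_⟩
  · rintro _ ⟨𝒬, h𝒬, rfl⟩
    obtain ⟨⟨K₀, hK₀⟩, hc, -⟩ := h𝒦mem 𝒬 h𝒬
    obtain ⟨x, hx⟩ := K₀.2.1
    exact ⟨⟨x, Set.mem_biUnion hK₀ hx⟩, unionKS_compact hc, unionKS_sat 𝒬⟩
  · rintro _ ⟨𝒬₁, h₁, rfl⟩ _ ⟨𝒬₂, h₂, rfl⟩
    obtain ⟨𝒬₃, h₃, hs₁, hs₂⟩ := h𝒦dir 𝒬₁ h₁ 𝒬₂ h₂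
    exact ⟨F 𝒬₃, Set.mem_image_of_mem F h₃,
      Set.biUnion_subset_biUnion_left hs₁, Set.biUnion_subset_biUnion_left hs₂⟩
  · rintro _ ⟨𝒬, h𝒬, rfl⟩
    obtain ⟨K, hKdia, hK𝒬⟩ := h𝒦meet 𝒬 h𝒬
    obtain ⟨x, hxK, hxA⟩ := hKdia
    exact ⟨x, hxA, Set.mem_biUnion hK𝒬 hxK⟩
  · intro B hB hBmeet hBA
    have hmeet' : ∀ 𝒬 ∈ 𝒦, (diaKS B ∩ 𝒬).Nonempty := by
      intro 𝒬 h𝒬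
      obtain ⟨x, hxB, hxF⟩ := hBmeet (F 𝒬) ⟨𝒬, h𝒬, rfl⟩
      obtain ⟨K, hK𝒬, hxK⟩ := Set.mem_iUnion₂.1 hxF
      exact ⟨K, ⟨x, hxK, hxB⟩, hK𝒬⟩
    have hsub : diaKS B ⊆ diaKS A := by
      rintro K ⟨x, hxK, hxB⟩
      exact ⟨x, hxK, hBA hxB⟩
    have heq : diaKS B = diaKS A := h𝒦min (diaKS B) (diaKS_closed hB) hmeet' hsub
    refine subset_antisymm hBA fun a haA => ?_
    have hmem : ptKS a ∈ diaKS A := ⟨a, mem_satPt_self a, haA⟩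
    rw [← heq] at hmem
    obtain ⟨b, hbSat, hbB⟩ := hmem
    by_contra haB
    exact Set.mem_sInter.1 hbSat Bᶜ ⟨hB.isOpen_compl, haB⟩ hbB
end
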